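/- arXiv:1211.5455 — 10 statements merged into one kernel-verified Lean document; each statement's English description precedes it below -/
import Mathlib

section
/- Let W be a random variable taking values in ℕ = {1,2,...} with probability generating function ρ(s) = E[s^W]. Then the function F_ρ is continuous and nondecreasing on [0,∞), F_ρ(α) = 0 for all 0 ≤ α ≤ α*_ρ while F_ρ(α) > 0 for all α > α*_ρ, and the threshold satisfies α*_ρ ∈ [0,1]; moreover, if E[W] < ∞ then α*_ρ < 1. -/
open Filter Topology Set

/-- The probability generating function `ρ(s) = E[s^W]` of an `ℕ`-valued random
variable `W` with probability mass function `p`. -/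
noncomputable def rho (p : ℕ → ℝ) (s : ℝ) : ℝ := ∑' k, p k * s ^ k

/-- The exponential growth rate `F_ρ(α)`, with the convention `0^0 = 1`
(which holds for `Real.rpow`). -/
noncomputable def Ffun (p : ℕ → ℝ) (α : ℝ) : ℝ :=
  Real.log (sSup ((fun γ : ℝ =>
    (1 + rho p (1 - 2 * γ)) ^ α / (2 * γ ^ γ * (1 - γ) ^ (1 - γ))) '' Set.Icc 0 (1/2)))

/-- The threshold `α*_ρ = inf {α ≥ 0 : F_ρ(α) > 0}`. -/
noncomputable def alphaStar (p : ℕ → ℝ) : ℝ := sInf {α : ℝ | 0 ≤ α ∧ 0 < Ffun p α}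

/-!
With `b(γ) = 1 + ρ(1 - 2γ) ∈ [1, 2]` and `d(γ) = 2 γ^γ (1-γ)^(1-γ) ≥ 1` (the binary entropy is at
most `log 2`), `exp F(α)` is the supremum of `b^α / d` over `[0, 1/2]`, and the ratio is `1` at
`γ = 1/2`. Hence `F(0) = 0`, `F` is nondecreasing and `F(α') ≤ F(α) + (α' - α) log 2`, so `F` is
continuous and vanishes exactly up to its threshold. At `γ = 0` the ratio is `2^(α-1)`, so `F > 0`
for `α > 1`. With finite mean, `ρ(1 - 2γ) ≥ 1 - 2γ E[W]` while `γ^γ = 1 + γ log γ + o(γ)` drops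
faster, so `F(1) > 0` and by continuity the threshold lies below `1`.
-/

noncomputable def posThreshold (F : ℝ → ℝ) : ℝ := sInf {α : ℝ | 0 ≤ α ∧ 0 < F α}

section PosThreshold

variable {F : ℝ → ℝ}

theorem bddBelow_setOf_nonneg_and_pos : BddBelow {α : ℝ | 0 ≤ α ∧ 0 < F α} := ⟨0, fun _ h => h.1⟩

theorem posThreshold_nonneg : 0 ≤ posThreshold F := Real.sInf_nonneg fun _ h => h.1

theorem posThreshold_lt_of_pos (hc : ContinuousOn F (Ici 0)) {α : ℝ} (hα : 0 < α)
    (hF : 0 < F α) : posThreshold F < α := by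
  have hcont : ContinuousWithinAt F (Iio α) α := by
    have := (hc α hα.le).mono (Ico_subset_Ici_self : Ico (0 : ℝ) α ⊆ Ici 0)
    rwa [ContinuousWithinAt, nhdsWithin_Ico_eq_nhdsLT hα] at this
  obtain ⟨β, hβF, hβ0, hβα⟩ :=
    ((hcont.eventually (lt_mem_nhds hF)).and (Ioo_mem_nhdsLT hα)).exists
  exact (csInf_le bddBelow_setOf_nonneg_and_pos ⟨hβ0.le, hβF⟩).trans_lt hβα

theorem eq_zero_of_le_posThreshold (hc : ContinuousOn F (Ici 0)) (hm : MonotoneOn F (Ici 0))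
    (h0 : F 0 = 0) {α : ℝ} (hα : 0 ≤ α) (hαF : α ≤ posThreshold F) : F α = 0 := by
  refine le_antisymm (not_lt.1 fun hF => ?_) (h0 ▸ hm self_mem_Ici hα hα)
  rcases hα.eq_or_lt with rfl | hα
  · exact hF.ne' h0
  · exact (posThreshold_lt_of_pos hc hα hF).not_ge hαF

theorem pos_of_posThreshold_lt (hm : MonotoneOn F (Ici 0)) (hne : ∃ β, 0 ≤ β ∧ 0 < F β)
    {α : ℝ} (hα : posThreshold F < α) : 0 < F α := by
  obtain ⟨β, ⟨hβ0, hβF⟩, hβα⟩ := exists_lt_of_csInf_lt hne hα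
  exact hβF.trans_le (hm hβ0 (mem_Ici.2 (hβ0.trans hβα.le)) hβα.le)

theorem posThreshold_le_of_forall_lt {c : ℝ} (hc : 0 ≤ c) (hF : ∀ α, c < α → 0 < F α) :
    posThreshold F ≤ c := by
  rw [← csInf_Ioi (a := c)]
  exact csInf_le_csInf bddBelow_setOf_nonneg_and_pos nonempty_Ioi
    fun α hα => ⟨hc.trans hα.le, hF α hα⟩

end PosThreshold

noncomputable def supPowDiv {ι : Type*} (K : Set ι) (b d : ι → ℝ) (α : ℝ) : ℝ :=
  sSup ((fun γ => b γ ^ α / d γ) '' K)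

section SupPowDiv

variable {ι : Type*} {K : Set ι} {b d : ι → ℝ} {B α α' : ℝ}

theorem powDiv_le_pow (hb : ∀ γ ∈ K, 1 ≤ b γ) (hbB : ∀ γ ∈ K, b γ ≤ B)
    (hd : ∀ γ ∈ K, 1 ≤ d γ) (hα : 0 ≤ α) {γ : ι} (hγ : γ ∈ K) : b γ ^ α / d γ ≤ B ^ α :=
  (div_le_self (by have := hb γ hγ; positivity) (hd γ hγ)).trans
    (Real.rpow_le_rpow (zero_le_one.trans (hb γ hγ)) (hbB γ hγ) hα)

theorem powDiv_le_supPowDiv (hb : ∀ γ ∈ K, 1 ≤ b γ) (hbB : ∀ γ ∈ K, b γ ≤ B)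
    (hd : ∀ γ ∈ K, 1 ≤ d γ) (hα : 0 ≤ α) {γ : ι} (hγ : γ ∈ K) :
    b γ ^ α / d γ ≤ supPowDiv K b d α :=
  le_csSup ⟨B ^ α, forall_mem_image.2 fun _ hγ' => powDiv_le_pow hb hbB hd hα hγ'⟩
    (mem_image_of_mem _ hγ)

theorem one_le_supPowDiv (hb : ∀ γ ∈ K, 1 ≤ b γ) (hbB : ∀ γ ∈ K, b γ ≤ B)
    (hd : ∀ γ ∈ K, 1 ≤ d γ) (h₀ : ∃ γ ∈ K, b γ = 1 ∧ d γ = 1) (hα : 0 ≤ α) :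
    1 ≤ supPowDiv K b d α := by
  obtain ⟨γ, hγ, hbγ, hdγ⟩ := h₀
  simpa [hbγ, hdγ] using powDiv_le_supPowDiv hb hbB hd hα hγ

theorem supPowDiv_zero (hb : ∀ γ ∈ K, 1 ≤ b γ) (hbB : ∀ γ ∈ K, b γ ≤ B)
    (hd : ∀ γ ∈ K, 1 ≤ d γ) (h₀ : ∃ γ ∈ K, b γ = 1 ∧ d γ = 1) :
    supPowDiv K b d 0 = 1 := by
  refine le_antisymm ?_ (one_le_supPowDiv hb hbB hd h₀ le_rfl)
  obtain ⟨γ₀, hγ₀, -⟩ := id h₀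
  refine csSup_le ⟨_, mem_image_of_mem _ hγ₀⟩ (forall_mem_image.2 fun γ hγ => ?_)
  simpa only [Real.rpow_zero, one_div] using inv_le_one_of_one_le₀ (hd γ hγ)

theorem supPowDiv_mono (hb : ∀ γ ∈ K, 1 ≤ b γ) (hbB : ∀ γ ∈ K, b γ ≤ B)
    (hd : ∀ γ ∈ K, 1 ≤ d γ) (hK : K.Nonempty) (hα : 0 ≤ α) (hαα' : α ≤ α') :
    supPowDiv K b d α ≤ supPowDiv K b d α' := by
  refine csSup_le (hK.image _) (forall_mem_image.2 fun γ hγ => ?_)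
  calc b γ ^ α / d γ ≤ b γ ^ α' / d γ := by
        gcongr
        exacts [zero_le_one.trans (hd γ hγ), hb γ hγ]
    _ ≤ supPowDiv K b d α' := powDiv_le_supPowDiv hb hbB hd (hα.trans hαα') hγ

theorem supPowDiv_le_mul_rpow (hb : ∀ γ ∈ K, 1 ≤ b γ) (hbB : ∀ γ ∈ K, b γ ≤ B)
    (hd : ∀ γ ∈ K, 1 ≤ d γ) (hK : K.Nonempty) (hα : 0 ≤ α) (hαα' : α ≤ α') :
    supPowDiv K b d α' ≤ supPowDiv K b d α * B ^ (α' - α) := by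
  refine csSup_le (hK.image _) (forall_mem_image.2 fun γ hγ => ?_)
  have hbγ := hb γ hγ
  have hbγ0 : 0 < b γ := zero_lt_one.trans_le hbγ
  calc b γ ^ α' / d γ = b γ ^ α / d γ * b γ ^ (α' - α) := by
        rw [← add_sub_cancel α α', Real.rpow_add hbγ0, add_sub_cancel_left]
        ring
    _ ≤ supPowDiv K b d α * B ^ (α' - α) := by
        have hle := powDiv_le_supPowDiv hb hbB hd hα hγ
        have hdγ : 0 < d γ := zero_lt_one.trans_le (hd γ hγ)
        have hnn : 0 ≤ b γ ^ α / d γ := by positivity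
        exact mul_le_mul hle (Real.rpow_le_rpow hbγ0.le (hbB γ hγ) (sub_nonneg.2 hαα'))
          (by positivity) (hnn.trans hle)

theorem monotoneOn_log_supPowDiv (hb : ∀ γ ∈ K, 1 ≤ b γ) (hbB : ∀ γ ∈ K, b γ ≤ B)
    (hd : ∀ γ ∈ K, 1 ≤ d γ) (h₀ : ∃ γ ∈ K, b γ = 1 ∧ d γ = 1) :
    MonotoneOn (fun α => Real.log (supPowDiv K b d α)) (Ici 0) := by
  obtain ⟨γ₀, hγ₀, -⟩ := id h₀
  exact fun α hα α' _ hαα' => Real.log_le_log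
    (zero_lt_one.trans_le (one_le_supPowDiv hb hbB hd h₀ hα))
    (supPowDiv_mono hb hbB hd ⟨γ₀, hγ₀⟩ hα hαα')

theorem lipschitzOnWith_log_supPowDiv (hb : ∀ γ ∈ K, 1 ≤ b γ) (hbB : ∀ γ ∈ K, b γ ≤ B)
    (hd : ∀ γ ∈ K, 1 ≤ d γ) (h₀ : ∃ γ ∈ K, b γ = 1 ∧ d γ = 1) :
    LipschitzOnWith (Real.log B).toNNReal (fun α => Real.log (supPowDiv K b d α)) (Ici 0) := by
  obtain ⟨γ₀, hγ₀, hbγ₀, -⟩ := id h₀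
  have hB : 1 ≤ B := hbγ₀ ▸ hbB γ₀ hγ₀
  have hpos : ∀ α : ℝ, 0 ≤ α → 0 < supPowDiv K b d α := fun α hα =>
    zero_lt_one.trans_le (one_le_supPowDiv hb hbB hd h₀ hα)
  refine LipschitzOnWith.of_le_add_mul' _ fun x hx y hy => ?_
  rcases le_total x y with hxy | hyx
  · have := monotoneOn_log_supPowDiv hb hbB hd h₀ hx hy hxy
    have := mul_nonneg (Real.log_nonneg hB) (dist_nonneg (x := x) (y := y))
    dsimp only at *
    linarith
  · calc Real.log (supPowDiv K b d x) ≤ Real.log (supPowDiv K b d y * B ^ (x - y)) :=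
          Real.log_le_log (hpos x hx) (supPowDiv_le_mul_rpow hb hbB hd ⟨γ₀, hγ₀⟩ hy hyx)
      _ = Real.log (supPowDiv K b d y) + Real.log B * dist x y := by
          rw [Real.log_mul (hpos y hy).ne' (by positivity), Real.log_rpow (by positivity),
            Real.dist_eq, abs_of_nonneg (sub_nonneg.2 hyx), mul_comm]

theorem log_supPowDiv_pos (hb : ∀ γ ∈ K, 1 ≤ b γ) (hbB : ∀ γ ∈ K, b γ ≤ B)
    (hd : ∀ γ ∈ K, 1 ≤ d γ) (hα : 0 ≤ α) {γ : ι} (hγ : γ ∈ K) (h : 1 < b γ ^ α / d γ) :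
    0 < Real.log (supPowDiv K b d α) :=
  Real.log_pos (h.trans_le (powDiv_le_supPowDiv hb hbB hd hα hγ))

end SupPowDiv

theorem rpow_self_mul_rpow_one_sub_self {γ : ℝ} (h0 : 0 ≤ γ) (h1 : γ ≤ 1) :
    γ ^ γ * (1 - γ) ^ (1 - γ) = Real.exp (-Real.binEntropy γ) := by
  have hself : ∀ x : ℝ, 0 ≤ x → x ^ x = Real.exp (-Real.negMulLog x) := fun x hx => by
    rcases hx.eq_or_lt with rfl | hx
    · simp
    · rw [Real.rpow_def_of_pos hx, Real.negMulLog, neg_mul, neg_neg, mul_comm]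
  rw [hself γ h0, hself (1 - γ) (sub_nonneg.2 h1), ← Real.exp_add,
    Real.binEntropy_eq_negMulLog_add_negMulLog_one_sub, neg_add]

theorem one_le_two_mul_rpow_self_mul_rpow_one_sub_self {γ : ℝ} (h0 : 0 ≤ γ) (h1 : γ ≤ 1) :
    1 ≤ 2 * γ ^ γ * (1 - γ) ^ (1 - γ) := by
  have : Real.exp (-Real.log 2) ≤ Real.exp (-Real.binEntropy γ) :=
    Real.exp_le_exp.2 (neg_le_neg Real.binEntropy_le_log_two)
  rw [Real.exp_neg, Real.exp_log two_pos] at this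
  rw [mul_assoc, rpow_self_mul_rpow_one_sub_self h0 h1]
  linarith

theorem exists_rpow_self_lt_one_sub_mul {m : ℝ} (hm : 0 ≤ m) :
    ∃ γ ∈ Ioc (0 : ℝ) (1 / 2), γ ^ γ < 1 - m * γ := by
  set c := 2 * m + 1
  set γ := Real.exp (-c)
  have hγ : 0 < γ := Real.exp_pos _
  have hγc : γ * (c + 1) ≤ 1 := by
    calc γ * (c + 1) ≤ γ * Real.exp c := by gcongr; exact Real.add_one_le_exp c
      _ = 1 := by rw [← Real.exp_add, neg_add_cancel, Real.exp_zero]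
  have hcγ : 0 < c * γ := by positivity
  refine ⟨γ, ⟨hγ, by nlinarith⟩, ?_⟩
  calc γ ^ γ = (Real.exp (c * γ))⁻¹ := by
        rw [Real.rpow_def_of_pos hγ, Real.log_exp, ← Real.exp_neg, neg_mul]
    _ ≤ (1 + c * γ)⁻¹ := inv_anti₀ (by positivity) (by linarith [Real.add_one_le_exp (c * γ)])
    _ < 1 - m * γ := by
        rw [inv_lt_iff_one_lt_mul₀' (by positivity)]
        nlinarith

section Pgf

variable {p : ℕ → ℝ} {s : ℝ}

theorem summable_of_tsum_eq_one (hpsum : ∑' k, p k = 1) : Summable p := by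
  by_contra h
  simp [tsum_eq_zero_of_not_summable h] at hpsum

theorem rho_nonneg (hpnn : ∀ k, 0 ≤ p k) (hs : 0 ≤ s) : 0 ≤ rho p s :=
  tsum_nonneg fun k => mul_nonneg (hpnn k) (pow_nonneg hs k)

theorem summable_mul_pow (hpnn : ∀ k, 0 ≤ p k) (hpsum : ∑' k, p k = 1) (hs0 : 0 ≤ s)
    (hs1 : s ≤ 1) : Summable fun k => p k * s ^ k :=
  (summable_of_tsum_eq_one hpsum).of_nonneg_of_le
    (fun k => mul_nonneg (hpnn k) (pow_nonneg hs0 k))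
    fun k => mul_le_of_le_one_right (hpnn k) (pow_le_one₀ hs0 hs1)

theorem rho_le_one (hpnn : ∀ k, 0 ≤ p k) (hpsum : ∑' k, p k = 1) (hs0 : 0 ≤ s) (hs1 : s ≤ 1) :
    rho p s ≤ 1 :=
  hpsum ▸ (summable_mul_pow hpnn hpsum hs0 hs1).tsum_le_tsum
    (fun k => mul_le_of_le_one_right (hpnn k) (pow_le_one₀ hs0 hs1))
    (summable_of_tsum_eq_one hpsum)

theorem rho_zero (hp0 : p 0 = 0) : rho p 0 = 0 := by
  rw [rho, tsum_eq_single 0 fun k hk => by simp [hk], pow_zero, mul_one, hp0]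

theorem rho_one (hpsum : ∑' k, p k = 1) : rho p 1 = 1 := by
  simp [rho, hpsum]

theorem one_sub_mul_le_rho (hpnn : ∀ k, 0 ≤ p k) (hpsum : ∑' k, p k = 1)
    (hmean : Summable fun k : ℕ => (k : ℝ) * p k) (hs0 : 0 ≤ s) (hs1 : s ≤ 1) :
    1 - (∑' k : ℕ, (k : ℝ) * p k) * (1 - s) ≤ rho p s := by
  have hp := summable_of_tsum_eq_one hpsum
  calc 1 - (∑' k : ℕ, (k : ℝ) * p k) * (1 - s)
      = ∑' k, (p k - (k : ℝ) * p k * (1 - s)) := by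
        rw [hp.tsum_sub (hmean.mul_right _), hpsum, tsum_mul_right]
    _ ≤ rho p s := by
        refine (hp.sub (hmean.mul_right _)).tsum_le_tsum (fun k => ?_)
          (summable_mul_pow hpnn hpsum hs0 hs1)
        have := one_add_mul_le_pow (a := s - 1) (by linarith) k
        rw [add_sub_cancel] at this
        nlinarith [hpnn k]

end Pgf

section Ffun

variable {p : ℕ → ℝ} {γ : ℝ}

theorem one_le_one_add_rho (hpnn : ∀ k, 0 ≤ p k) (hγ : γ ∈ Icc (0 : ℝ) (1 / 2)) :
    1 ≤ 1 + rho p (1 - 2 * γ) :=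
  le_add_of_nonneg_right (rho_nonneg hpnn (by linarith [hγ.2]))

theorem one_add_rho_le_two (hpnn : ∀ k, 0 ≤ p k) (hpsum : ∑' k, p k = 1)
    (hγ : γ ∈ Icc (0 : ℝ) (1 / 2)) : 1 + rho p (1 - 2 * γ) ≤ 2 := by
  linarith [rho_le_one hpnn hpsum (s := 1 - 2 * γ) (by linarith [hγ.2]) (by linarith [hγ.1])]

theorem one_le_two_mul_rpow_self_mul_of_mem_Icc (hγ : γ ∈ Icc (0 : ℝ) (1 / 2)) :
    1 ≤ 2 * γ ^ γ * (1 - γ) ^ (1 - γ) :=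
  one_le_two_mul_rpow_self_mul_rpow_one_sub_self hγ.1 (by linarith [hγ.2])

theorem Ffun_pos_of_one_lt (hpnn : ∀ k, 0 ≤ p k) (hpsum : ∑' k, p k = 1) {α : ℝ}
    (hα : 1 < α) : 0 < Ffun p α := by
  refine log_supPowDiv_pos (fun _ => one_le_one_add_rho hpnn)
    (fun _ => one_add_rho_le_two hpnn hpsum) (fun _ => one_le_two_mul_rpow_self_mul_of_mem_Icc)
    (by linarith) (γ := 0) (by norm_num) ?_
  have : (2 : ℝ) ^ (1 : ℝ) < 2 ^ α := Real.rpow_lt_rpow_of_exponent_lt one_lt_two hα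
  norm_num [rho_one hpsum] at this ⊢
  linarith

theorem Ffun_one_pos (hpnn : ∀ k, 0 ≤ p k) (hpsum : ∑' k, p k = 1)
    (hmean : Summable fun k : ℕ => (k : ℝ) * p k) : 0 < Ffun p 1 := by
  have hm : 0 ≤ ∑' k : ℕ, (k : ℝ) * p k := tsum_nonneg fun k => mul_nonneg k.cast_nonneg (hpnn k)
  obtain ⟨γ, ⟨hγ0, hγ⟩, hlt⟩ := exists_rpow_self_lt_one_sub_mul hm
  have hK : γ ∈ Icc (0 : ℝ) (1 / 2) := ⟨hγ0.le, hγ⟩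
  have hnum := one_sub_mul_le_rho hpnn hpsum hmean (s := 1 - 2 * γ) (by linarith) (by linarith)
  have hden : 2 * γ ^ γ * (1 - γ) ^ (1 - γ) ≤ 2 * γ ^ γ := by
    have : (1 - γ) ^ (1 - γ) ≤ 1 := Real.rpow_le_one (by linarith) (by linarith) (by linarith)
    have : 0 < γ ^ γ := Real.rpow_pos_of_pos hγ0 γ
    nlinarith
  refine log_supPowDiv_pos (fun _ => one_le_one_add_rho hpnn)
    (fun _ => one_add_rho_le_two hpnn hpsum) (fun _ => one_le_two_mul_rpow_self_mul_of_mem_Icc)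
    zero_le_one hK ?_
  rw [Real.rpow_one, one_lt_div (zero_lt_one.trans_le (one_le_two_mul_rpow_self_mul_of_mem_Icc hK))]
  linarith

end Ffun

theorem stmt0 (p : ℕ → ℝ) (hpnn : ∀ k, 0 ≤ p k) (hp0 : p 0 = 0)
    (hpsum : ∑' k, p k = 1) :
    ContinuousOn (Ffun p) (Set.Ici 0) ∧
    MonotoneOn (Ffun p) (Set.Ici 0) ∧
    (∀ α : ℝ, 0 ≤ α → α ≤ alphaStar p → Ffun p α = 0) ∧
    (∀ α : ℝ, alphaStar p < α → 0 < Ffun p α) ∧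
    alphaStar p ∈ Set.Icc (0 : ℝ) 1 ∧
    (Summable (fun k : ℕ => (k : ℝ) * p k) → alphaStar p < 1) := by
  have hb : ∀ γ ∈ Icc (0 : ℝ) (1 / 2), 1 ≤ 1 + rho p (1 - 2 * γ) :=
    fun _ => one_le_one_add_rho hpnn
  have hbB : ∀ γ ∈ Icc (0 : ℝ) (1 / 2), 1 + rho p (1 - 2 * γ) ≤ 2 :=
    fun _ => one_add_rho_le_two hpnn hpsum
  have hd : ∀ γ ∈ Icc (0 : ℝ) (1 / 2), 1 ≤ 2 * γ ^ γ * (1 - γ) ^ (1 - γ) :=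
    fun _ => one_le_two_mul_rpow_self_mul_of_mem_Icc
  have h₀ : ∃ γ ∈ Icc (0 : ℝ) (1 / 2),
      1 + rho p (1 - 2 * γ) = 1 ∧ 2 * γ ^ γ * (1 - γ) ^ (1 - γ) = 1 := by
    refine ⟨1 / 2, by norm_num, by norm_num [rho_zero hp0], ?_⟩
    rw [show (1 : ℝ) - 1 / 2 = 1 / 2 by norm_num, mul_assoc, ← Real.rpow_add one_half_pos]
    norm_num
  have hc : ContinuousOn (Ffun p) (Ici 0) :=
    (lipschitzOnWith_log_supPowDiv hb hbB hd h₀).continuousOn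
  have hm : MonotoneOn (Ffun p) (Ici 0) := monotoneOn_log_supPowDiv hb hbB hd h₀
  have h0 : Ffun p 0 = 0 := by
    rw [Ffun, ← supPowDiv, supPowDiv_zero hb hbB hd h₀, Real.log_one]
  exact ⟨hc, hm, fun _ => eq_zero_of_le_posThreshold hc hm h0,
    fun _ => pos_of_posThreshold_lt hm ⟨2, zero_le_two, Ffun_pos_of_one_lt hpnn hpsum one_lt_two⟩,
    ⟨posThreshold_nonneg, posThreshold_le_of_forall_lt zero_le_one
      fun _ => Ffun_pos_of_one_lt hpnn hpsum⟩,
    fun hmean => posThreshold_lt_of_pos hc one_pos (Ffun_one_pos hpnn hpsum hmean)⟩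
end

section
/- Let W be a random variable taking values in ℕ = {1,2,...} with probability generating function ρ(s) = E[s^W]. If P[W = 2] = 1 (so ρ(s) = s²), then α*_ρ = 1/2. -/
open Filter Topology Set

/-!
For `ρ(s) = s²` and `t = 1 - 2γ`, the logarithm of the quantity under the supremum is
`α log (1 + t²) - D(γ)`, where `D(γ) = log 2 - h(γ)` is the binary Kullback–Leibler divergence
from the fair coin. Combining the series of `log (1 - t²)` and `log ((1 + t) / (1 - t))` gives
`D(γ) = ∑ t^(2k+2) / (2(k+1)(2k+1))`, hence `t² / 2 ≤ D(γ) ≤ t² / (2(1 - t²))`. With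
`log (1 + t²) ≤ t²` the quantity is at most `1` (attained at `γ = 1/2`) when `α ≤ 1/2`; when
`α > 1/2` the upper bound on `D` shows it exceeds `1` for small `t > 0`. So `F_ρ(α) > 0` exactly
for `α > 1/2`.
-/

open Real

lemma rho_eq_pow_of_apply_eq_one {p : ℕ → ℝ} {n : ℕ} (hpnn : ∀ k, 0 ≤ p k)
    (hpsum : ∑' k, p k = 1) (hpn : p n = 1) (s : ℝ) : rho p s = s ^ n := by
  have hsum : HasSum p 1 := by
    refine (Summable.hasSum_iff ?_).2 hpsum
    by_contra h
    simp [tsum_eq_zero_of_not_summable h] at hpsum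
  classical
  have hrest : Function.update p n 0 = 0 := by
    refine (hasSum_zero_iff_of_nonneg fun k => ?_).1 (by simpa [hpn] using hsum.update n 0)
    rcases eq_or_ne k n with rfl | hk
    · simp
    · simpa [hk] using hpnn k
  have hzero : ∀ k ≠ n, p k = 0 := fun k hk => by
    simpa [hk] using congrFun hrest k
  rw [rho, tsum_eq_single n fun k hk => by rw [hzero k hk, zero_mul], hpn, one_mul]

lemma rpow_self_eq_exp_neg_negMulLog {x : ℝ} (hx : 0 ≤ x) : x ^ x = exp (-negMulLog x) := by
  rcases hx.eq_or_lt with rfl | hx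
  · simp
  · rw [rpow_def_of_pos hx, negMulLog, neg_mul, neg_neg, mul_comm]

lemma two_mul_rpow_self_mul_rpow_self {γ : ℝ} (h0 : 0 ≤ γ) (h1 : γ ≤ 1) :
    2 * γ ^ γ * (1 - γ) ^ (1 - γ) = exp (log 2 - binEntropy γ) := by
  rw [rpow_self_eq_exp_neg_negMulLog h0, rpow_self_eq_exp_neg_negMulLog (sub_nonneg.2 h1),
    binEntropy_eq_negMulLog_add_negMulLog_one_sub,
    show log 2 - (negMulLog γ + negMulLog (1 - γ)) = log 2 + -negMulLog γ + -negMulLog (1 - γ)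
      by ring, exp_add, exp_add, exp_log two_pos]

lemma hasSum_log_two_sub_binEntropy {γ : ℝ} (h0 : 0 < γ) (h1 : γ < 1) :
    HasSum (fun k : ℕ => ((1 - 2 * γ) ^ 2) ^ (k + 1) / (2 * (k + 1) * (2 * k + 1)))
      (log 2 - binEntropy γ) := by
  set t := 1 - 2 * γ with ht
  have hγ : γ = (1 - t) / 2 := by rw [ht]; ring
  have hpos : 0 < 1 - t := by linarith
  have hpos' : 0 < 1 + t := by linarith
  have habs : |t| < 1 := abs_lt.2 ⟨by linarith, by linarith⟩
  have hsq : |t ^ 2| < 1 := by rw [abs_pow, sq_lt_one_iff_abs_lt_one, abs_abs]; exact habs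
  have hterm : (fun k : ℕ => (t ^ 2) ^ (k + 1) / (2 * (k + 1) * (2 * k + 1))) =
      fun k : ℕ => t / 2 * (2 * (1 / (2 * k + 1)) * t ^ (2 * k + 1)) +
        -((t ^ 2) ^ (k + 1) / (k + 1)) / 2 := by
    funext k
    rw [← pow_mul, mul_add, mul_one, pow_succ]
    field_simp
    ring
  have hvalue : log 2 - binEntropy γ =
      t / 2 * (log (1 + t) - log (1 - t)) + - -log (1 - t ^ 2) / 2 := by
    rw [hγ, binEntropy, show 1 - (1 - t) / 2 = (1 + t) / 2 by ring, inv_div, inv_div,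
      log_div two_ne_zero hpos.ne', log_div two_ne_zero hpos'.ne',
      show 1 - t ^ 2 = (1 - t) * (1 + t) by ring, log_mul hpos.ne' hpos'.ne']
    ring
  rw [hterm, hvalue]
  exact ((hasSum_log_sub_log_of_abs_lt_one habs).mul_left (t / 2)).add
    ((hasSum_pow_div_log_of_abs_lt_one hsq).neg.div_const 2)

lemma binEntropy_le_log_two_sub {γ : ℝ} (h0 : 0 ≤ γ) (h1 : γ ≤ 1) :
    binEntropy γ ≤ log 2 - (1 - 2 * γ) ^ 2 / 2 := by
  rcases h0.eq_or_lt with rfl | h0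
  · norm_num
    linarith [log_two_gt_d9]
  rcases h1.eq_or_lt with rfl | h1
  · norm_num
    linarith [log_two_gt_d9]
  have := le_hasSum (hasSum_log_two_sub_binEntropy h0 h1) 0 fun k _ => by positivity
  norm_num at this
  linarith

lemma log_two_sub_binEntropy_le {γ : ℝ} (h0 : 0 < γ) (h1 : γ < 1) :
    log 2 - binEntropy γ ≤ (1 - 2 * γ) ^ 2 / (2 * (1 - (1 - 2 * γ) ^ 2)) := by
  set u := (1 - 2 * γ) ^ 2
  have hu0 : 0 ≤ u := sq_nonneg _
  have hu1 : u < 1 := by nlinarith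
  have hgeom := (hasSum_geometric_of_lt_one hu0 hu1).mul_left (u / 2)
  refine (hasSum_le (fun k => ?_) (hasSum_log_two_sub_binEntropy h0 h1) hgeom).trans_eq ?_
  · calc u ^ (k + 1) / (2 * (k + 1) * (2 * k + 1)) ≤ u ^ (k + 1) / 2 :=
          div_le_div_of_nonneg_left (by positivity) two_pos (by nlinarith [k.cast_nonneg (α := ℝ)])
      _ = u / 2 * u ^ k := by ring
  · field_simp

noncomputable def growthRatio (r : ℝ → ℝ) (α γ : ℝ) : ℝ :=
  (1 + r (1 - 2 * γ)) ^ α / (2 * γ ^ γ * (1 - γ) ^ (1 - γ))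

section Square

variable {α γ : ℝ}

lemma growthRatio_sq_eq_exp (h0 : 0 ≤ γ) (h1 : γ ≤ 1) :
    growthRatio (· ^ 2) α γ =
      exp (α * log (1 + (1 - 2 * γ) ^ 2) - (log 2 - binEntropy γ)) := by
  rw [growthRatio, two_mul_rpow_self_mul_rpow_self h0 h1, rpow_def_of_pos (by positivity),
    ← exp_sub, mul_comm]

lemma one_lt_growthRatio_sq_iff (h0 : 0 ≤ γ) (h1 : γ ≤ 1) :
    1 < growthRatio (· ^ 2) α γ ↔ log 2 - binEntropy γ < α * log (1 + (1 - 2 * γ) ^ 2) := by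
  rw [growthRatio_sq_eq_exp h0 h1, one_lt_exp_iff, sub_pos]

lemma growthRatio_sq_le_two_rpow (hα : 0 ≤ α) (h0 : 0 ≤ γ) (h1 : γ ≤ 1) :
    growthRatio (· ^ 2) α γ ≤ 2 ^ α := by
  rw [growthRatio_sq_eq_exp h0 h1, rpow_def_of_pos two_pos, exp_le_exp]
  have hlog : log (1 + (1 - 2 * γ) ^ 2) ≤ log 2 :=
    log_le_log (by positivity) (by nlinarith)
  nlinarith [binEntropy_le_log_two (p := γ)]

lemma growthRatio_sq_le_one (hα : α ≤ 1 / 2) (h0 : 0 ≤ γ) (h1 : γ ≤ 1) :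
    growthRatio (· ^ 2) α γ ≤ 1 := by
  rw [← not_lt, one_lt_growthRatio_sq_iff h0 h1, not_lt]
  have hpos : 0 < 1 + (1 - 2 * γ) ^ 2 := by positivity
  have hlog0 : 0 ≤ log (1 + (1 - 2 * γ) ^ 2) := log_nonneg (by nlinarith)
  have hlog : log (1 + (1 - 2 * γ) ^ 2) ≤ (1 - 2 * γ) ^ 2 := by
    linarith [log_le_sub_one_of_pos hpos]
  nlinarith [binEntropy_le_log_two_sub h0 h1]

lemma exists_one_lt_growthRatio_sq (hα : 1 / 2 < α) :
    ∃ γ ∈ Icc (0 : ℝ) (1 / 2), 1 < growthRatio (· ^ 2) α γ := by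
  set c := (2 * α - 1) / (2 * α + 1)
  have hc0 : 0 < c := div_pos (by linarith) (by linarith)
  have hc1 : c < 1 := (div_lt_one (by linarith)).2 (by linarith)
  have hc : c * (2 * α + 1) = 2 * α - 1 := div_mul_cancel₀ _ (by linarith)
  refine ⟨(1 - c / 2) / 2, ⟨by linarith, by linarith⟩, ?_⟩
  rw [one_lt_growthRatio_sq_iff (by linarith) (by linarith)]
  have hup := log_two_sub_binEntropy_le (γ := (1 - c / 2) / 2) (by linarith) (by linarith)
  rw [show 1 - 2 * ((1 - c / 2) / 2) = c / 2 by ring] at hup ⊢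
  -- With `u = t²`, `D ≤ u / (2(1 - u))` and `2u / (u + 2) ≤ log (1 + u)`, so it suffices that
  -- `u (4α + 1) < 4α - 2`, which the choice of `c` guarantees.
  set u := (c / 2) ^ 2 with hu
  have hu0 : 0 < u := by positivity
  have huc : u * (4 * α + 1) < 4 * α - 2 := by nlinarith
  have hlow := le_log_one_add_of_nonneg hu0.le
  have hkey : u / (2 * (1 - u)) < α * (2 * u / (u + 2)) := by
    rw [← mul_div_assoc, div_lt_div_iff₀ (by nlinarith) (by positivity)]
    nlinarith [mul_lt_mul_of_pos_left huc hu0]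
  nlinarith

end Square

lemma Ffun_pos_iff_of_rho_eq_sq {p : ℕ → ℝ} (hρ : rho p = (· ^ 2)) (α : ℝ) :
    0 < Ffun p α ↔ 1 / 2 < α := by
  set S := growthRatio (· ^ 2) α '' Icc 0 (1 / 2)
  have hF : Ffun p α = log (sSup S) := by
    show log (sSup (growthRatio (rho p) α '' _)) = _
    rw [hρ]
  have hne : S.Nonempty := (nonempty_Icc.2 (by norm_num)).image _
  have hnn : ∀ x ∈ S, 0 ≤ x := by
    rintro _ ⟨γ, hγ, rfl⟩
    rw [growthRatio_sq_eq_exp hγ.1 (by linarith [hγ.2])]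
    exact (exp_pos _).le
  rw [hF, log_pos_iff (sSup_nonneg hnn)]
  constructor
  · intro h
    by_contra! hα
    refine h.not_ge (csSup_le hne ?_)
    rintro _ ⟨γ, hγ, rfl⟩
    exact growthRatio_sq_le_one hα hγ.1 (by linarith [hγ.2])
  · intro hα
    obtain ⟨γ, hγ, hlt⟩ := exists_one_lt_growthRatio_sq hα
    have hbdd : BddAbove S := by
      refine ⟨2 ^ α, ?_⟩
      rintro _ ⟨γ, hγ, rfl⟩
      exact growthRatio_sq_le_two_rpow (by linarith) hγ.1 (by linarith [hγ.2])
    exact hlt.trans_le (le_csSup hbdd (mem_image_of_mem _ hγ))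

theorem stmt2_general (p : ℕ → ℝ) (hpnn : ∀ k, 0 ≤ p k)
    (hpsum : ∑' k, p k = 1) (hp2 : p 2 = 1) :
    alphaStar p = 1 / 2 := by
  have hρ : rho p = (· ^ 2) := funext (rho_eq_pow_of_apply_eq_one hpnn hpsum hp2)
  have hset : {α : ℝ | 0 ≤ α ∧ 0 < Ffun p α} = Ioi (1 / 2) := by
    ext α
    simp only [mem_ofPred_eq, mem_Ioi, Ffun_pos_iff_of_rho_eq_sq hρ]
    exact ⟨And.right, fun h => ⟨by linarith, h⟩⟩
  rw [alphaStar, hset, csInf_Ioi]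

theorem stmt2 (p : ℕ → ℝ) (hpnn : ∀ k, 0 ≤ p k) (hp0 : p 0 = 0)
    (hpsum : ∑' k, p k = 1) (hp2 : p 2 = 1) :
    alphaStar p = 1 / 2 :=
  stmt2_general p hpnn hpsum hp2
end

section
/- Let π_n(m) denote the probability that all n components of a multinomial (m; 1/n, ..., 1/n) random vector are even. Suppose m_n is even for each n and m_n/n → α ∈ (0,∞) as n → ∞, where α = λ tanh λ for some λ > 0. Then lim_{n→∞} n^{−1} log π_n(m_n) = log cosh λ − (λ tanh λ)(1 − log tanh λ). -/
open Filter Topology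

/-- `π_n(m)`: the probability that all `n` components of a multinomial
`(m; 1/n, …, 1/n)` random vector are even, i.e. that after throwing `m` balls
independently and uniformly into `n` urns, every urn contains an even number
of balls. -/
noncomputable def piProb (n m : ℕ) : ℝ :=
  ((Finset.univ.filter (fun f : Fin m → Fin n =>
      ∀ j, Even ((Finset.univ.filter (fun i => f i = j)).card))).card : ℝ) /
    (n : ℝ) ^ m

/-!
Expanding `(∑ⱼ εⱼ)ᵐ` and averaging over all sign vectors `ε ∈ {±1}ⁿ` kills every assignment of
balls with an odd urn, which gives the identity `2ⁿ nᵐ π_n(m) = ∑_{s ⊆ [n]} (n - 2|s|)ᵐ`; for even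
`m` all its terms are nonnegative.

Keeping only the sets with `|s| = ⌊x n⌋` and using `log (n choose xn) ≈ n H(x)` (Stirling) bounds
the rate below by `H(x) + α log (1 - 2x) - log 2`. Bounding every term by
`uᵐ ≤ 2 (t n / e)ᵐ cosh (m u / (t n))` turns the sum into `2 (2 cosh (m / (t n)))ⁿ` and bounds the
rate above by `α (log t - 1) + log cosh (α / t)`. For `t = tanh λ` and `x = (1 - t) / 2` the two
bounds agree.
-/

open Finset Real
open scoped Nat

section SignSum

variable {α : Type*} [Fintype α]

lemma sum_sign_eq_card_sub_two_mul_card [DecidableEq α] (s : Finset α) :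
    ∑ j, (if j ∈ s then (-1 : ℝ) else 1) = Fintype.card α - 2 * #s := by
  rw [sum_ite, filter_mem_eq_inter, filter_notMem_eq_sdiff]
  simp [card_univ_sdiff, Nat.cast_sub (card_le_univ s)]
  ring

lemma sum_prod_sign_pow_eq_prod_one_add [DecidableEq α] (c : α → ℕ) :
    ∑ s : Finset α, ∏ j, (if j ∈ s then (-1 : ℝ) else 1) ^ c j = ∏ j, (1 + (-1) ^ c j) := by
  rw [prod_one_add, powerset_univ]
  refine sum_congr rfl fun s _ => ?_
  simp only [ite_pow, one_pow]
  rw [prod_ite_mem, univ_inter]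

lemma prod_one_add_neg_one_pow (c : α → ℕ) :
    ∏ j, (1 + (-1 : ℝ) ^ c j) = if ∀ j, Even (c j) then 2 ^ Fintype.card α else 0 := by
  split_ifs with h
  · rw [prod_congr rfl fun j _ => by rw [(h j).neg_one_pow, one_add_one_eq_two], prod_const,
      card_univ]
  · obtain ⟨j, hj⟩ := not_forall.mp h
    exact prod_eq_zero (mem_univ j) (by simp [(Nat.not_even_iff_odd.mp hj).neg_one_pow])

theorem sum_card_sub_two_mul_card_pow [DecidableEq α] (m : ℕ) :
    ∑ s : Finset α, ((Fintype.card α : ℝ) - 2 * #s) ^ m =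
      2 ^ Fintype.card α * #{f : Fin m → α | ∀ j, Even #{i | f i = j}} := by
  calc ∑ s : Finset α, ((Fintype.card α : ℝ) - 2 * #s) ^ m
      = ∑ f : Fin m → α, ∑ s : Finset α, ∏ i, (if f i ∈ s then (-1 : ℝ) else 1) := by
        simp only [← sum_sign_eq_card_sub_two_mul_card, Fintype.sum_pow]
        exact sum_comm
    _ = ∑ f : Fin m → α, ∏ j, (1 + (-1 : ℝ) ^ #{i | f i = j}) := by
        refine sum_congr rfl fun f _ => ?_
        rw [← sum_prod_sign_pow_eq_prod_one_add]
        refine sum_congr rfl fun s _ => ?_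
        rw [← prod_fiberwise' univ f (fun j => if j ∈ s then (-1 : ℝ) else 1)]
        simp only [prod_const]
    _ = _ := by
        simp only [prod_one_add_neg_one_pow, sum_ite, sum_const_zero, add_zero, sum_const,
          nsmul_eq_mul]
        ring

lemma sum_exp_mul_card_sub_two_mul_card (c : ℝ) :
    ∑ s : Finset α, exp (c * (Fintype.card α - 2 * #s)) = (2 * cosh c) ^ Fintype.card α := by
  classical
  rw [cosh_eq, mul_div_cancel₀ _ two_ne_zero, add_comm, ← card_univ, ← prod_const,
    Fintype.prod_add]
  refine sum_congr rfl fun s _ => ?_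
  rw [prod_const, prod_const, card_compl, ← exp_nat_mul, ← exp_nat_mul, ← exp_add, card_univ,
    Nat.cast_sub (card_le_univ s)]
  ring_nf

end SignSum

theorem piProb_eq_sum (n m : ℕ) :
    piProb n m = (∑ s : Finset (Fin n), ((n : ℝ) - 2 * #s) ^ m) / (2 ^ n * n ^ m) := by
  have h := sum_card_sub_two_mul_card_pow (α := Fin n) m
  rw [Fintype.card_fin] at h
  rw [piProb, h, mul_div_mul_left _ _ (by positivity)]
  -- `piProb` decides `∀ j : Fin n` by `Nat.decidableForallFin`,
  -- not by `Fintype.decidableForallFintype`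
  convert rfl

theorem choose_mul_pow_le_sum {n m : ℕ} (hm : Even m) (k : ℕ) :
    (n.choose k : ℝ) * ((n : ℝ) - 2 * k) ^ m ≤ ∑ s : Finset (Fin n), ((n : ℝ) - 2 * #s) ^ m := by
  calc (n.choose k : ℝ) * ((n : ℝ) - 2 * k) ^ m
      = ∑ s ∈ powersetCard k (univ : Finset (Fin n)), ((n : ℝ) - 2 * #s) ^ m := by
        rw [sum_congr rfl fun s hs => by rw [mem_powersetCard_univ.mp hs], sum_const,
          card_powersetCard, card_univ, Fintype.card_fin, nsmul_eq_mul]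
    _ ≤ _ := sum_le_sum_of_subset_of_nonneg (subset_univ _) fun _ _ _ => hm.pow_nonneg _

theorem choose_mul_div_pow_le_piProb {n m : ℕ} (hm : Even m) (k : ℕ) :
    n.choose k * (((n : ℝ) - 2 * k) / n) ^ m / 2 ^ n ≤ piProb n m := by
  rw [piProb_eq_sum, div_pow, mul_div_assoc', div_div, mul_comm ((n : ℝ) ^ m)]
  gcongr
  exact choose_mul_pow_le_sum hm k

theorem piProb_pos {n m : ℕ} (hm : Even m) (hn : n ≠ 0) : 0 < piProb n m :=
  calc (0 : ℝ) < n.choose 0 * (((n : ℝ) - 2 * (0 : ℕ)) / n) ^ m / 2 ^ n := by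
        simp [div_self (Nat.cast_ne_zero.mpr hn : (n : ℝ) ≠ 0)]
    _ ≤ piProb n m := choose_mul_div_pow_le_piProb hm 0

lemma pow_le_mul_exp (m : ℕ) {y L : ℝ} (hy : 0 ≤ y) (hL : 0 < L) :
    y ^ m ≤ L ^ m * exp (m * (y / L - 1)) := by
  calc y ^ m = L ^ m * (y / L) ^ m := by rw [div_pow, mul_div_cancel₀ _ (by positivity)]
    _ ≤ L ^ m * exp (y / L - 1) ^ m := by
        gcongr
        linarith [add_one_le_exp (y / L - 1)]
    _ = L ^ m * exp (m * (y / L - 1)) := by rw [exp_nat_mul]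

lemma exp_abs_le_two_mul_cosh (x : ℝ) : exp |x| ≤ 2 * cosh x := by
  rw [cosh_eq]
  rcases abs_cases x with ⟨h, _⟩ | ⟨h, _⟩ <;> rw [h] <;> linarith [exp_pos x, exp_pos (-x)]

lemma even_pow_le_mul_cosh {m : ℕ} (hm : Even m) (u : ℝ) {L : ℝ} (hL : 0 < L) :
    u ^ m ≤ 2 * L ^ m * exp (-m) * cosh (m / L * u) := by
  calc u ^ m = |u| ^ m := (hm.pow_abs u).symm
    _ ≤ L ^ m * exp (m * (|u| / L - 1)) := pow_le_mul_exp m (abs_nonneg u) hL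
    _ = L ^ m * exp (-m) * exp |m / L * u| := by
        rw [mul_assoc, ← exp_add, abs_mul, abs_of_nonneg (by positivity : (0 : ℝ) ≤ m / L)]
        ring_nf
    _ ≤ L ^ m * exp (-m) * (2 * cosh (m / L * u)) := by gcongr; exact exp_abs_le_two_mul_cosh _
    _ = 2 * L ^ m * exp (-m) * cosh (m / L * u) := by ring

theorem piProb_le_mul_cosh_pow {n m : ℕ} (hm : Even m) (hn : n ≠ 0) {t : ℝ} (ht : 0 < t) :
    piProb n m ≤ 2 * t ^ m * exp (-m) * cosh (m / (t * n)) ^ n := by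
  have hsum := sum_exp_mul_card_sub_two_mul_card (α := Fin n)
  simp only [Fintype.card_fin] at hsum
  rw [piProb_eq_sum, div_le_iff₀ (by positivity)]
  calc ∑ s : Finset (Fin n), ((n : ℝ) - 2 * #s) ^ m
      ≤ ∑ s : Finset (Fin n), 2 * (t * n) ^ m * exp (-m) * cosh (m / (t * n) * (n - 2 * #s)) :=
        sum_le_sum fun s _ => even_pow_le_mul_cosh hm _ (by positivity)
    _ = (t * n) ^ m * exp (-m) *
          (∑ s : Finset (Fin n), exp (m / (t * n) * (n - 2 * #s)) +
            ∑ s : Finset (Fin n), exp (-(m / (t * n)) * (n - 2 * #s))) := by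
        rw [← sum_add_distrib, mul_sum]
        refine sum_congr rfl fun s _ => ?_
        rw [cosh_eq]
        ring_nf
    _ = 2 * t ^ m * exp (-m) * cosh (m / (t * n)) ^ n * (2 ^ n * n ^ m) := by
        rw [hsum, hsum, cosh_neg]
        ring

lemma abs_log_factorial_sub_le (n : ℕ) : |log n ! - n * (log n - 1)| ≤ 1 + log n := by
  rcases n with _ | k
  · simp
  set n := k + 1
  have hn : (n : ℝ) ≠ 0 := by positivity
  have hlog_n := log_natCast_nonneg n
  rw [abs_le]
  constructor
  · have := Stirling.le_log_factorial_stirling (Nat.succ_ne_zero k)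
    have : 0 ≤ log (2 * π) := log_nonneg (by linarith [pi_gt_three])
    linarith
  · have hseq : log (Stirling.stirlingSeq n) ≤ 1 - log 2 / 2 := by
      have := Stirling.log_stirlingSeq'_antitone (Nat.zero_le k)
      simp only [Function.comp_apply, Stirling.stirlingSeq_one] at this
      rwa [log_div (exp_ne_zero 1) (by positivity), log_exp, log_sqrt zero_le_two] at this
    have := Stirling.log_stirlingSeq_formula n
    rw [log_mul two_ne_zero hn, log_div hn (exp_ne_zero 1), log_exp] at this
    linarith

lemma mul_log_div_eq (x : ℝ) {y : ℝ} (hy : y ≠ 0) : x * log (x / y) = x * log x - x * log y := by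
  rcases eq_or_ne x 0 with rfl | hx
  · simp
  · rw [log_div hx hy, mul_sub]

lemma natCast_mul_binEntropy_div {n k : ℕ} (hk : k ≤ n) :
    n * binEntropy (k / n) = n * log n - k * log k - (n - k : ℕ) * log (n - k : ℕ) := by
  rcases eq_or_ne n 0 with rfl | hn
  · simp [Nat.le_zero.mp hk]
  have hn' : (n : ℝ) ≠ 0 := by exact_mod_cast hn
  have h1 : 1 - (k : ℝ) / n = (n - k : ℕ) / n := by
    rw [Nat.cast_sub hk]; field_simp
  rw [binEntropy, h1, log_inv, log_inv]
  have e1 := mul_log_div_eq (k : ℝ) hn'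
  have e2 := mul_log_div_eq ((n - k : ℕ) : ℝ) hn'
  rw [mul_add, ← mul_assoc, ← mul_assoc, mul_div_cancel₀ _ hn', mul_div_cancel₀ _ hn']
  rw [Nat.cast_sub hk] at e2 ⊢
  linear_combination -e1 - e2

lemma log_natCast_le_log_natCast {k n : ℕ} (hk : k ≤ n) : log k ≤ log n := by
  rcases Nat.eq_zero_or_pos k with rfl | hk0
  · simpa using log_natCast_nonneg n
  · exact log_le_log (by positivity) (by exact_mod_cast hk)

theorem abs_log_choose_sub_le {n k : ℕ} (hk : k ≤ n) :
    |log (n.choose k) - n * binEntropy (k / n)| ≤ 3 * (1 + log n) := by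
  have hchoose : log (n.choose k) = log n ! - log k ! - log (n - k)! := by
    rw [Nat.cast_choose ℝ hk, log_div (by positivity) (by positivity),
      log_mul (by positivity) (by positivity)]
    ring
  have hn := abs_le.mp (abs_log_factorial_sub_le n)
  have hk' := abs_le.mp (abs_log_factorial_sub_le k)
  have hnk := abs_le.mp (abs_log_factorial_sub_le (n - k))
  have := log_natCast_le_log_natCast hk
  have := log_natCast_le_log_natCast (Nat.sub_le n k)
  rw [hchoose, natCast_mul_binEntropy_div hk, abs_le, Nat.cast_sub hk] at *
  constructor <;> linarith

lemma tendsto_one_add_log_div_atTop : Tendsto (fun n : ℕ => (1 + log n) / n) atTop (𝓝 0) := by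
  have hlog := (tendsto_pow_log_div_mul_add_atTop 1 0 1 one_ne_zero).comp
    tendsto_natCast_atTop_atTop
  simpa [add_div] using tendsto_inv_atTop_nhds_zero_nat.add hlog

theorem tendsto_log_choose_div {k : ℕ → ℕ} {x : ℝ} (hk : ∀ n, k n ≤ n)
    (hkx : Tendsto (fun n => (k n : ℝ) / n) atTop (𝓝 x)) :
    Tendsto (fun n : ℕ => log (n.choose (k n)) / n) atTop (𝓝 (binEntropy x)) := by
  have hH := (binEntropy_continuous.tendsto x).comp hkx
  have hdiff : Tendsto (fun n : ℕ => log (n.choose (k n)) / n - binEntropy (k n / n)) atTop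
      (𝓝 0) := by
    refine squeeze_zero_norm' ?_ (by simpa using tendsto_one_add_log_div_atTop.const_mul 3)
    filter_upwards [eventually_ne_atTop 0] with n hn
    have hn' : (0 : ℝ) < n := by positivity
    rw [norm_eq_abs, ← mul_div_assoc, div_sub' hn'.ne', abs_div, abs_of_pos hn']
    gcongr
    exact abs_log_choose_sub_le (hk n)
  simpa using hdiff.add hH

theorem le_inv_mul_log_piProb {n m k : ℕ} (hm : Even m) (hk : 2 * k < n) :
    log (n.choose k) / n + (m / n) * log (1 - 2 * (k / n)) - log 2 ≤
      (n : ℝ)⁻¹ * log (piProb n m) := by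
  have hn : (0 : ℝ) < n := by norm_cast; omega
  have hgap : (0 : ℝ) < (n - 2 * k) / n := div_pos (by rw [sub_pos]; exact_mod_cast hk) hn
  have hchoose : (0 : ℝ) < n.choose k := by exact_mod_cast Nat.choose_pos (by omega)
  have hlow := log_le_log (by positivity) (choose_mul_div_pow_le_piProb hm k)
  rw [log_div (by positivity) (by positivity), log_mul hchoose.ne' (by positivity), log_pow,
    log_pow] at hlow
  have hsplit : 1 - 2 * ((k : ℝ) / n) = (n - 2 * k) / n := by field_simp
  rw [hsplit, le_inv_mul_iff₀ hn]
  calc (n : ℝ) * (log (n.choose k) / n + m / n * log ((n - 2 * k) / n) - log 2)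
      = log (n.choose k) + m * log ((n - 2 * k) / n) - n * log 2 := by field_simp
    _ ≤ log (piProb n m) := hlow

theorem inv_mul_log_piProb_le {n m : ℕ} (hm : Even m) (hn : n ≠ 0) {t : ℝ} (ht : 0 < t) :
    (n : ℝ)⁻¹ * log (piProb n m) ≤
      log 2 / n + (m / n) * (log t - 1) + log (cosh ((m / n) / t)) := by
  have hn' : (0 : ℝ) < n := by positivity
  have hup := log_le_log (piProb_pos hm hn) (piProb_le_mul_cosh_pow hm hn ht)
  rw [log_mul (by positivity) (by positivity), log_mul (by positivity) (exp_ne_zero _),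
    log_mul two_ne_zero (by positivity), log_pow, log_pow, log_exp] at hup
  rw [inv_mul_le_iff₀ hn', mul_comm]
  calc log (piProb n m) ≤ _ := hup
    _ = (log 2 / n + m / n * (log t - 1) + log (cosh ((m / n) / t))) * n := by
        rw [div_div, mul_comm (n : ℝ) t]; field_simp; ring

section Rates

variable {m : ℕ → ℕ} {α : ℝ}

theorem exists_tendsto_le_inv_mul_log_piProb (hm : ∀ n, Even (m n))
    (hma : Tendsto (fun n => (m n : ℝ) / n) atTop (𝓝 α)) {x : ℝ} (hx0 : 0 ≤ x) (hx1 : x < 1 / 2) :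
    ∃ L : ℕ → ℝ, Tendsto L atTop (𝓝 (binEntropy x + α * log (1 - 2 * x) - log 2)) ∧
      ∀ᶠ n : ℕ in atTop, L n ≤ (n : ℝ)⁻¹ * log (piProb n (m n)) := by
  set k : ℕ → ℕ := fun n => ⌊x * n⌋₊
  have hkx : Tendsto (fun n => (k n : ℝ) / n) atTop (𝓝 x) :=
    (tendsto_nat_floor_mul_div_atTop hx0).comp tendsto_natCast_atTop_atTop
  have hk : ∀ n, k n ≤ n := fun n =>
    Nat.floor_le_of_le (by nlinarith [(by positivity : (0 : ℝ) ≤ n)])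
  have h2k : ∀ᶠ n in atTop, 2 * k n < n := by
    filter_upwards [eventually_gt_atTop 0] with n hn
    have hn' : (0 : ℝ) < n := Nat.cast_pos.mpr hn
    have : (2 * k n : ℝ) < n := by nlinarith [Nat.floor_le (by positivity : 0 ≤ x * n)]
    exact_mod_cast this
  refine ⟨_, ?_, h2k.mono fun n hn => le_inv_mul_log_piProb (hm n) hn⟩
  have hlog_gap : Tendsto (fun n => log (1 - 2 * (k n / n))) atTop (𝓝 (log (1 - 2 * x))) :=
    (continuousAt_log (by linarith)).tendsto.comp (tendsto_const_nhds.sub (hkx.const_mul 2))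
  exact ((tendsto_log_choose_div hk hkx).add (hma.mul hlog_gap)).sub_const _

theorem exists_tendsto_inv_mul_log_piProb_le (hm : ∀ n, Even (m n))
    (hma : Tendsto (fun n => (m n : ℝ) / n) atTop (𝓝 α)) {t : ℝ} (ht : 0 < t) :
    ∃ U : ℕ → ℝ, Tendsto U atTop (𝓝 (α * (log t - 1) + log (cosh (α / t)))) ∧
      ∀ᶠ n : ℕ in atTop, (n : ℝ)⁻¹ * log (piProb n (m n)) ≤ U n := by
  refine ⟨_, ?_, (eventually_ne_atTop 0).mono fun n hn => inv_mul_log_piProb_le (hm n) hn ht⟩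
  simpa using ((tendsto_const_div_atTop_nhds_zero_nat _).add (hma.mul_const _)).add
    ((continuous_cosh.tendsto _).comp (hma.div_const t) |>.log (cosh_pos _).ne')

end Rates

theorem binEntropy_one_sub_tanh_div_two (x : ℝ) :
    binEntropy ((1 - tanh x) / 2) = log (2 * cosh x) - x * tanh x := by
  have hc := (cosh_pos x).ne'
  have h₁ : (1 - tanh x) / 2 = exp (-x) / (2 * cosh x) := by
    rw [tanh_eq_sinh_div_cosh, ← cosh_sub_sinh]; field_simp
  have h₂ : 1 - (1 - tanh x) / 2 = exp x / (2 * cosh x) := by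
    rw [tanh_eq_sinh_div_cosh, ← cosh_add_sinh]; field_simp; ring
  rw [binEntropy, h₂, h₁, inv_div, inv_div, log_div (by positivity) (exp_ne_zero _),
    log_div (by positivity) (exp_ne_zero _), log_exp, log_exp, ← h₁, ← h₂]
  ring

theorem stmt8 (lam : ℝ) (hlam : 0 < lam) (α : ℝ) (hα : α = lam * Real.tanh lam)
    (m : ℕ → ℕ) (hmeven : ∀ n, Even (m n))
    (hma : Filter.Tendsto (fun n => (m n : ℝ) / n) atTop (𝓝 α)) :
    Filter.Tendsto (fun n : ℕ => (n : ℝ)⁻¹ * Real.log (piProb n (m n))) atTop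
      (𝓝 (Real.log (Real.cosh lam) -
            (lam * Real.tanh lam) * (1 - Real.log (Real.tanh lam)))) := by
  have ht : 0 < tanh lam :=
    tanh_eq_sinh_div_cosh lam ▸ div_pos (sinh_pos_iff.mpr hlam) (cosh_pos lam)
  have ht1 : tanh lam < 1 := tanh_lt_one lam
  obtain ⟨L, hL, hL_le⟩ := exists_tendsto_le_inv_mul_log_piProb hmeven hma
    (x := (1 - tanh lam) / 2) (by linarith) (by linarith)
  obtain ⟨U, hU, hU_le⟩ := exists_tendsto_inv_mul_log_piProb_le hmeven hma ht
  have hα_div : α / tanh lam = lam := by rw [hα, mul_div_assoc, div_self ht.ne', mul_one]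
  refine tendsto_of_tendsto_of_tendsto_of_le_of_le' ?_ ?_ hL_le hU_le
  · convert hL using 2
    rw [binEntropy_one_sub_tanh_div_two, log_mul two_ne_zero (cosh_pos _).ne', hα]
    ring_nf
  · convert hU using 2
    rw [hα_div, hα]
    ring
end

section
/- Let F be a finite field with q elements, and let X_1, X_2, ... be i.i.d. random vectors uniformly distributed on F^n \ {0}. Let T_n = min{m ∈ ℕ : X_m ∈ span{X_1, ..., X_{m−1}}}. Then for any integer r ≥ 0, lim_{n→∞} P[T_n > n + 1 − r] = ∏_{j=r}^∞ (1 − q^{−j}) =: p_r ∈ [0,1], where p_0 = 0. Moreover, for all n ∈ ℕ and 1 ≤ r ≤ n, P[T_n > n + 1 − r] ≥ exp(−q^{1−r}) if q ≥ 3, and P[T_n > n + 1 − r] ≥ exp(−(4/3)·2^{1−r}) if q = 2. -/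
open Filter Topology

/-!
A sequence of nonzero rows survives past step `s ≤ n` exactly when its first `s` rows are
linearly independent, so counting independent tuples gives
`P[T_n > s] = ∏_{i<s} (q^n - q^i) / (q^n - 1)`. With `s = n + 1 - r` and `y = q⁻¹`, reversing
the product rewrites this as `∏_{j<n+1-r} (1 - y^(j+r)) / (1 - y^n)^(n+1-r)`. By Bernoulli's
inequality the denominator tends to `1`, which gives the limit; as it is at most `1`, the
explicit bounds reduce to the partial products, which are bounded below through
`1 - x ≥ exp (-x / (1 - a))` (`0 ≤ x ≤ a < 1`) and the geometric series. For `q = 2, r = 1`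
this is too lossy on the first two factors `1/2 · 3/4`, which are split off first.
-/

/-- `T_n` for a sequence of `n+1` row vectors in `F^n`: the first `m` such that
the first `m` rows are linearly dependent over `F`, i.e. the rank of the
top-`m` submatrix is less than `m`. (Rows beyond the `(n+1)`-st are padded by
zero, which does not affect the value since the first `n+1` rows are always
dependent.) -/
noncomputable def TvalF (F : Type*) [Field F] (n : ℕ)
    (g : Fin (n + 1) → Fin n → F) : ℕ :=
  sInf {m : ℕ | (Matrix.of (fun (i : Fin m) (j : Fin n) =>
    if h : (i : ℕ) < n + 1 then g ⟨(i : ℕ), h⟩ j else 0)).rank < m}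

open Classical in
/-- `P[T_n > s]` when the rows `X_1, …, X_{n+1}` are i.i.d. uniform on
`F^n \ {0}` (there are `(q^n - 1)^(n+1)` equally likely sequences of nonzero
rows). -/
noncomputable def probTF (F : Type*) [Field F] [Fintype F] (n s : ℕ) : ℝ :=
  ((Finset.univ.filter (fun g : Fin (n + 1) → Fin n → F =>
      (∀ i, g i ≠ 0) ∧ s < TvalF F n g)).card : ℝ) /
    ((Fintype.card F ^ n - 1 : ℕ) : ℝ) ^ (n + 1)

theorem Matrix.rank_lt_card_iff_not_linearIndependent_row {F ι κ : Type*} [Field F]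
    [Fintype ι] [Fintype κ] (M : Matrix ι κ F) :
    M.rank < Fintype.card ι ↔ ¬ LinearIndependent F M.row := by
  rw [M.rank_eq_finrank_span_row, linearIndependent_iff_card_le_finrank_span, not_le]
  rfl

section Tval

variable {F : Type*} [Field F] {n : ℕ}

theorem rank_prefix_lt_iff {m : ℕ} (hm : m ≤ n + 1) (g : Fin (n + 1) → Fin n → F) :
    (Matrix.of (fun (i : Fin m) (j : Fin n) =>
      if h : (i : ℕ) < n + 1 then g ⟨(i : ℕ), h⟩ j else 0)).rank < m ↔
    ¬ LinearIndependent F (fun i : Fin m => g (Fin.castLE hm i)) := by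
  have hrows : (Matrix.of (fun (i : Fin m) (j : Fin n) =>
      if h : (i : ℕ) < n + 1 then g ⟨(i : ℕ), h⟩ j else 0)) =
      Matrix.of (fun i => g (Fin.castLE hm i)) := by
    ext i j
    rw [Matrix.of_apply, Matrix.of_apply, dif_pos (i.2.trans_le hm)]
    rfl
  have := (Matrix.of fun i => g (Fin.castLE hm i)).rank_lt_card_iff_not_linearIndependent_row
  rw [Fintype.card_fin] at this
  rwa [hrows]

theorem tvalF_le (g : Fin (n + 1) → Fin n → F) : TvalF F n g ≤ n + 1 :=
  Nat.sInf_le <| (Matrix.rank_le_card_width _).trans_lt (by simp)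

theorem lt_tvalF_iff {s : ℕ} (hs : s ≤ n + 1) (g : Fin (n + 1) → Fin n → F) :
    s < TvalF F n g ↔ LinearIndependent F (fun i : Fin s => g (Fin.castLE hs i)) := by
  constructor
  · intro hlt
    by_contra hdep
    exact (show TvalF F n g ≤ s from Nat.sInf_le ((rank_prefix_lt_iff hs g).2 hdep)).not_gt hlt
  · intro hli
    by_contra! hle
    have hmem : TvalF F n g ∈ {m : ℕ | (Matrix.of (fun (i : Fin m) (j : Fin n) =>
        if h : (i : ℕ) < n + 1 then g ⟨(i : ℕ), h⟩ j else 0)).rank < m} :=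
      Nat.sInf_mem ⟨n + 1, (Matrix.rank_le_card_width _).trans_lt (by simp)⟩
    exact (rank_prefix_lt_iff (hle.trans hs) g).1 hmem
      (hli.comp (Fin.castLE hle) (Fin.castLE_injective hle))

end Tval

section Counting

variable {F V : Type*} [Field F] [AddCommGroup V] [Module F V]

theorem card_linearIndependent_prefix_and_ne_zero [Finite V] {m s : ℕ} (hs : s ≤ m) :
    Nat.card {g : Fin m → V //
        LinearIndependent F (fun i : Fin s => g (Fin.castLE hs i)) ∧ ∀ i, g i ≠ 0} =
      Nat.card {u : Fin s → V // LinearIndependent F u} * (Nat.card V - 1) ^ (m - s) := by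
  obtain ⟨t, rfl⟩ := Nat.exists_eq_add_of_le hs
  have hnonzero : Nat.card {v : V // v ≠ 0} = Nat.card V - 1 := by
    have := Fintype.ofFinite V
    classical
    simp [Nat.card_eq_fintype_card, Fintype.card_subtype_compl]
  have hsplit : ∀ g : Fin (s + t) → V,
      (LinearIndependent F (fun i : Fin s => g (Fin.castLE hs i)) ∧ ∀ i, g i ≠ 0) ↔
        (LinearIndependent F ((Fin.appendEquiv s t).symm g).1 ∧
          ∀ i, ((Fin.appendEquiv s t).symm g).2 i ≠ 0) := by
    intro g
    refine ⟨fun h => ⟨h.1, fun i => h.2 _⟩, fun h => ⟨h.1, fun i => ?_⟩⟩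
    refine Fin.addCases (fun j => ?_) (fun j => h.2 j) i
    exact h.1.ne_zero j
  rw [Nat.card_congr ((Equiv.subtypeEquiv (Fin.appendEquiv s t).symm hsplit).trans
      ((Equiv.subtypeProdEquivProd (p := fun u : Fin s → V => LinearIndependent F u)
        (q := fun v : Fin t → V => ∀ i, v i ≠ 0)).trans
        (Equiv.prodCongrRight fun _ =>
          Equiv.subtypePiEquivPi (p := fun (_ : Fin t) (v : V) => v ≠ 0)))),
    Nat.card_prod, Nat.card_pi, Finset.prod_const, Finset.card_univ, Fintype.card_fin,
    Nat.add_sub_cancel_left, hnonzero]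

end Counting

section Products

open Finset

theorem exp_neg_div_le_one_sub {x a : ℝ} (hx : 0 ≤ x) (hxa : x ≤ a) (ha : a < 1) :
    Real.exp (-(x / (1 - a))) ≤ 1 - x := by
  have hx1 : 0 < 1 - x := by linarith
  calc Real.exp (-(x / (1 - a))) ≤ Real.exp (1 - (1 - x)⁻¹) := by
        rw [show 1 - (1 - x)⁻¹ = -(x / (1 - x)) by field_simp; ring]
        exact Real.exp_le_exp.2
          (neg_le_neg (div_le_div_of_nonneg_left hx (by linarith) (by linarith)))
    _ ≤ Real.exp (Real.log (1 - x)) := Real.exp_le_exp.2 (Real.one_sub_inv_le_log_of_pos hx1)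
    _ = 1 - x := Real.exp_log hx1

theorem exp_neg_le_prod_one_sub_pow {y : ℝ} (hy0 : 0 ≤ y) (hy1 : y < 1) {r : ℕ} (hr : 1 ≤ r)
    (N : ℕ) :
    Real.exp (-(y ^ r / ((1 - y) * (1 - y ^ r)))) ≤ ∏ j ∈ range N, (1 - y ^ (j + r)) := by
  have hyr : y ^ r < 1 := pow_lt_one₀ hy0 hy1 (by omega)
  have hsum : ∑ j ∈ range N, y ^ (j + r) ≤ y ^ r / (1 - y) := by
    have h := geom_sum_Ico_le_of_lt_one (m := r) (n := N + r) hy0 hy1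
    rw [sum_Ico_eq_sum_range, Nat.add_sub_cancel] at h
    simpa only [add_comm r] using h
  calc Real.exp (-(y ^ r / ((1 - y) * (1 - y ^ r))))
      ≤ Real.exp (-∑ j ∈ range N, y ^ (j + r) / (1 - y ^ r)) := by
        rw [← sum_div, ← div_div]
        exact Real.exp_le_exp.2 (neg_le_neg (div_le_div_of_nonneg_right hsum (by linarith)))
    _ = ∏ j ∈ range N, Real.exp (-(y ^ (j + r) / (1 - y ^ r))) := by
        rw [← sum_neg_distrib, Real.exp_sum]
    _ ≤ ∏ j ∈ range N, (1 - y ^ (j + r)) :=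
        prod_le_prod (fun _ _ => (Real.exp_pos _).le) fun j _ =>
          exp_neg_div_le_one_sub (by positivity)
            (pow_le_pow_of_le_one hy0 hy1.le (by omega)) hyr

theorem multipliable_one_sub_pow {y : ℝ} (hy0 : 0 ≤ y) (hy1 : y < 1) (r : ℕ) :
    Multipliable fun j : ℕ => 1 - y ^ (j + r) := by
  simp_rw [sub_eq_add_neg]
  exact Real.multipliable_one_add_of_summable
    ((summable_nat_add_iff r).2 (summable_geometric_of_lt_one hy0 hy1)).neg

theorem tprod_one_sub_pow_mem_Icc {y : ℝ} (hy0 : 0 ≤ y) (hy1 : y < 1) (r : ℕ) :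
    ∏' j : ℕ, (1 - y ^ (j + r)) ∈ Set.Icc (0 : ℝ) 1 :=
  isClosed_Icc.mem_of_tendsto (multipliable_one_sub_pow hy0 hy1 r).hasProd.tendsto_prod_nat <|
    Eventually.of_forall fun _ =>
      ⟨prod_nonneg fun _ _ => sub_nonneg.2 (pow_le_one₀ hy0 hy1.le),
        prod_le_one (fun _ _ => sub_nonneg.2 (pow_le_one₀ hy0 hy1.le))
          fun _ _ => sub_le_self _ (pow_nonneg hy0 _)⟩

theorem tendsto_one_sub_pow_pow {y : ℝ} (hy0 : 0 ≤ y) (hy1 : y < 1) (r : ℕ) :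
    Tendsto (fun n : ℕ => (1 - y ^ n) ^ (n + 1 - r)) atTop (𝓝 1) := by
  have hlower : Tendsto (fun n : ℕ => 1 - ((n : ℝ) * y ^ n + y ^ n)) atTop (𝓝 1) := by
    simpa using ((tendsto_self_mul_const_pow_of_lt_one hy0 hy1).add
      (tendsto_pow_atTop_nhds_zero_of_lt_one hy0 hy1)).const_sub 1
  refine tendsto_of_tendsto_of_tendsto_of_le_of_le hlower tendsto_const_nhds (fun n => ?_)
    fun n => pow_le_one₀ (sub_nonneg.2 (pow_le_one₀ hy0 hy1.le))
      (sub_le_self _ (pow_nonneg hy0 n))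
  have hbernoulli := one_add_mul_le_pow (a := -y ^ n)
    (by linarith [pow_le_one₀ hy0 hy1.le (n := n)]) (n + 1 - r)
  have hexp : ((n + 1 - r : ℕ) : ℝ) ≤ n + 1 := by exact_mod_cast Nat.sub_le _ _
  rw [← sub_eq_add_neg] at hbernoulli
  nlinarith [pow_nonneg hy0 n]

theorem zpow_one_sub_natCast_eq_inv_pow_div {x : ℝ} (hx : x ≠ 0) (r : ℕ) :
    x ^ ((1 : ℤ) - r) = x⁻¹ ^ r / x⁻¹ := by
  rw [zpow_sub₀ hx, zpow_one, zpow_natCast, inv_pow, div_inv_eq_mul, inv_mul_eq_div]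

theorem exp_neg_zpow_le_prod_one_sub_inv_pow {q : ℕ} (hq : 3 ≤ q) {r : ℕ} (hr : 1 ≤ r)
    (N : ℕ) :
    Real.exp (-(q : ℝ) ^ ((1 : ℤ) - r)) ≤
      ∏ j ∈ range N, (1 - (q : ℝ)⁻¹ ^ (j + r)) := by
  have hq3 : (3 : ℝ) ≤ q := by exact_mod_cast hq
  set y := (q : ℝ)⁻¹
  have hy0 : 0 < y := by positivity
  have hy3 : y ≤ 1 / 3 := by simpa [y] using inv_anti₀ (by norm_num) hq3
  have hyr : y ^ r ≤ y := pow_le_of_le_one hy0.le (by linarith) (by omega)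
  refine le_trans (Real.exp_le_exp.2 ?_) (exp_neg_le_prod_one_sub_pow hy0.le (by linarith) hr N)
  rw [zpow_one_sub_natCast_eq_inv_pow_div (by positivity), neg_le_neg_iff]
  refine div_le_div_of_nonneg_left (by positivity) hy0 ?_
  nlinarith [mul_le_mul_of_nonneg_left hyr (by linarith : (0 : ℝ) ≤ 1 - y)]

theorem exp_neg_mul_zpow_le_prod_one_sub_half_pow_of_two_le {r : ℕ} (hr : 2 ≤ r) (N : ℕ) :
    Real.exp (-(4 / 3) * (2 : ℝ) ^ ((1 : ℤ) - r)) ≤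
      ∏ j ∈ range N, (1 - (2 : ℝ)⁻¹ ^ (j + r)) := by
  refine le_trans (Real.exp_le_exp.2 ?_)
    (exp_neg_le_prod_one_sub_pow (by norm_num) (by norm_num) (by omega) N)
  have hquarter : (2 : ℝ)⁻¹ ^ r ≤ 1 / 4 :=
    (pow_le_pow_of_le_one (by norm_num) (by norm_num) hr).trans (by norm_num)
  have hpos : (0 : ℝ) < 1 - (2 : ℝ)⁻¹ ^ r := by linarith
  rw [zpow_one_sub_natCast_eq_inv_pow_div (by norm_num), neg_mul, neg_le_neg_iff,
    div_le_iff₀ (by positivity), div_inv_eq_mul]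
  nlinarith [mul_nonneg (pow_nonneg (by norm_num : (0 : ℝ) ≤ 2⁻¹) r) (sub_nonneg.2 hquarter)]

theorem exp_neg_mul_zpow_le_prod_one_sub_half_pow {r : ℕ} (hr : 1 ≤ r) (N : ℕ) :
    Real.exp (-(4 / 3) * (2 : ℝ) ^ ((1 : ℤ) - r)) ≤
      ∏ j ∈ range N, (1 - (2 : ℝ)⁻¹ ^ (j + r)) := by
  rcases (show r = 1 ∨ 2 ≤ r by omega) with rfl | hr2
  · calc Real.exp (-(4 / 3) * (2 : ℝ) ^ ((1 : ℤ) - (1 : ℕ)))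
          ≤ 3 / 8 * Real.exp (-(4 / 3) * (2 : ℝ) ^ ((1 : ℤ) - (3 : ℕ))) := by
          have hexp : Real.exp (-1) ≤ 3 / 8 := by
            rw [Real.exp_neg, inv_le_comm₀ (Real.exp_pos 1) (by norm_num)]
            linarith [Real.exp_one_gt_d9]
          norm_num
          rw [show -(4 / 3 : ℝ) = -1 + -(1 / 3) by norm_num, Real.exp_add]
          gcongr
      _ ≤ (1 - (2 : ℝ)⁻¹ ^ (0 + 1)) * (1 - (2 : ℝ)⁻¹ ^ (1 + 1)) *
            ∏ j ∈ range N, (1 - (2 : ℝ)⁻¹ ^ (j + 3)) := by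
          rw [show (1 - (2 : ℝ)⁻¹ ^ (0 + 1)) * (1 - (2 : ℝ)⁻¹ ^ (1 + 1)) = 3 / 8 by
            norm_num]
          gcongr
          exact exp_neg_mul_zpow_le_prod_one_sub_half_pow_of_two_le (by norm_num) N
      _ = ∏ j ∈ range (N + 2), (1 - (2 : ℝ)⁻¹ ^ (j + 1)) := by
          rw [prod_range_succ', prod_range_succ']
          ring_nf
      _ ≤ ∏ j ∈ range N, (1 - (2 : ℝ)⁻¹ ^ (j + 1)) :=
          prod_le_prod_of_subset_of_le_one (range_subset_range.2 (by omega))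
            (fun _ _ => sub_nonneg.2 (pow_le_one₀ (by norm_num) (by norm_num)))
            fun _ _ _ => sub_le_self _ (by positivity)
  · exact exp_neg_mul_zpow_le_prod_one_sub_half_pow_of_two_le hr2 N

end Products

section Probability

open Finset

variable {F : Type*} [Field F] [Fintype F] {n : ℕ}

open Classical in
theorem card_filter_lt_tvalF {s : ℕ} (hs : s ≤ n) :
    (univ.filter fun g : Fin (n + 1) → Fin n → F =>
        (∀ i, g i ≠ 0) ∧ s < TvalF F n g).card =
      (∏ i : Fin s, (Fintype.card F ^ n - Fintype.card F ^ (i : ℕ))) *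
        (Fintype.card F ^ n - 1) ^ (n + 1 - s) := by
  have hs' : s ≤ n + 1 := hs.trans n.le_succ
  rw [← Fintype.card_subtype, ← Nat.card_eq_fintype_card,
    Nat.card_congr (Equiv.subtypeEquivRight fun g => by rw [lt_tvalF_iff hs' g, and_comm]),
    card_linearIndependent_prefix_and_ne_zero,
    card_linearIndependent (by rwa [Module.finrank_fin_fun]), Module.finrank_fin_fun,
    Nat.card_eq_fintype_card, Fintype.card_fun, Fintype.card_fin]

theorem probTF_eq_prod {s : ℕ} (hn : 0 < n) (hs : s ≤ n) :
    probTF F n s = ∏ i ∈ range s,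
      (((Fintype.card F : ℝ) ^ n - (Fintype.card F : ℝ) ^ i) /
        ((Fintype.card F : ℝ) ^ n - 1)) := by
  set q := Fintype.card F
  have hq : 1 < q := Fintype.one_lt_card
  have hden : (0 : ℝ) < (q : ℝ) ^ n - 1 := by
    have : (1 : ℝ) < (q : ℝ) ^ n := one_lt_pow₀ (by exact_mod_cast hq) hn.ne'
    linarith
  have hcast : ∀ i ≤ n, ((q ^ n - q ^ i : ℕ) : ℝ) = (q : ℝ) ^ n - (q : ℝ) ^ i := by
    intro i hi
    rw [Nat.cast_sub (Nat.pow_le_pow_right hq.le hi)]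
    push_cast
    rfl
  have hcast1 : ((q ^ n - 1 : ℕ) : ℝ) = (q : ℝ) ^ n - 1 := by
    simpa using hcast 0 n.zero_le
  rw [probTF, card_filter_lt_tvalF hs, Nat.cast_mul, Nat.cast_prod, Nat.cast_pow, hcast1,
    Fin.prod_univ_eq_prod_range (fun i => ((q ^ n - q ^ i : ℕ) : ℝ)),
    prod_div_distrib, prod_const, card_range,
    prod_congr rfl fun i hi => hcast i ((mem_range.1 hi).le.trans hs)]
  rw [← pow_sub_mul_pow _ (hs.trans n.le_succ)]
  field_simp

theorem probTF_eq_div {r : ℕ} (hr : 1 ≤ r) (hrn : r ≤ n) :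
    probTF F n (n + 1 - r) =
      (∏ j ∈ range (n + 1 - r), (1 - ((Fintype.card F : ℝ))⁻¹ ^ (j + r))) /
        (1 - ((Fintype.card F : ℝ))⁻¹ ^ n) ^ (n + 1 - r) := by
  rw [probTF_eq_prod (by omega) (by omega), ← prod_range_reflect,
    pow_eq_prod_const (1 - _) (n + 1 - r), ← prod_div_distrib]
  set q : ℝ := (Fintype.card F : ℝ)
  have hq : q ≠ 0 := Nat.cast_ne_zero.2 Fintype.card_ne_zero
  refine prod_congr rfl fun j hj => ?_
  have hjr : j + r ≤ n := by have := mem_range.1 hj; omega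
  rw [show n + 1 - r - 1 - j = n - (j + r) by omega, pow_sub₀ _ hq hjr, inv_pow, inv_pow]
  field_simp

open Classical in
theorem probTF_succ (n : ℕ) : probTF F n (n + 1) = 0 := by
  rw [probTF, filter_false_of_mem fun g _ h => (tvalF_le g).not_gt h.2, card_empty,
    Nat.cast_zero, zero_div]

theorem inv_card_lt_one : ((Fintype.card F : ℝ))⁻¹ < 1 :=
  inv_lt_one_of_one_lt₀ (Nat.one_lt_cast.2 Fintype.one_lt_card)

theorem prod_le_probTF {r : ℕ} (hr : 1 ≤ r) (hrn : r ≤ n) :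
    ∏ j ∈ range (n + 1 - r), (1 - ((Fintype.card F : ℝ))⁻¹ ^ (j + r)) ≤
      probTF F n (n + 1 - r) := by
  set y := ((Fintype.card F : ℝ))⁻¹
  have hy0 : 0 ≤ y := by positivity
  have hy1 : y < 1 := inv_card_lt_one
  rw [probTF_eq_div hr hrn]
  exact le_div_self (prod_nonneg fun _ _ => sub_nonneg.2 (pow_le_one₀ hy0 hy1.le))
    (pow_pos (sub_pos.2 (pow_lt_one₀ hy0 hy1 (by omega))) _)
    (pow_le_one₀ (sub_nonneg.2 (pow_le_one₀ hy0 hy1.le)) (sub_le_self _ (pow_nonneg hy0 n)))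

theorem tendsto_probTF {r : ℕ} (hr : 1 ≤ r) :
    Tendsto (fun n => probTF F n (n + 1 - r)) atTop
      (𝓝 (∏' j : ℕ, (1 - ((Fintype.card F : ℝ))⁻¹ ^ (j + r)))) := by
  set y := ((Fintype.card F : ℝ))⁻¹
  have hy0 : 0 ≤ y := by positivity
  have hy1 : y < 1 := inv_card_lt_one
  have hpartial : Tendsto (fun n => ∏ j ∈ range (n + 1 - r), (1 - y ^ (j + r))) atTop
      (𝓝 (∏' j : ℕ, (1 - y ^ (j + r)))) :=
    (multipliable_one_sub_pow hy0 hy1 r).hasProd.tendsto_prod_nat.comp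
      ((tendsto_sub_atTop_nat r).comp (tendsto_add_atTop_nat 1))
  have hquot := hpartial.div (tendsto_one_sub_pow_pow hy0 hy1 r) one_ne_zero
  rw [div_one] at hquot
  exact hquot.congr' (eventually_atTop.2 ⟨r, fun n hn => (probTF_eq_div hr hn).symm⟩)

end Probability

theorem stmt10 (F : Type*) [Field F] [Fintype F] (q : ℕ)
    (hq : Fintype.card F = q) :
    (∀ r : ℕ,
      Filter.Tendsto (fun n : ℕ => probTF F n (n + 1 - r)) atTop
        (𝓝 (∏' j : ℕ, (1 - ((q : ℝ))⁻¹ ^ (j + r))))) ∧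
    (∀ r : ℕ, (∏' j : ℕ, (1 - ((q : ℝ))⁻¹ ^ (j + r))) ∈ Set.Icc (0 : ℝ) 1) ∧
    (∏' j : ℕ, (1 - ((q : ℝ))⁻¹ ^ (j + 0))) = 0 ∧
    (∀ n r : ℕ, 1 ≤ r → r ≤ n →
      (3 ≤ q → Real.exp (-(q : ℝ) ^ ((1 : ℤ) - (r : ℤ))) ≤ probTF F n (n + 1 - r)) ∧
      (q = 2 → Real.exp (-(4 / 3) * (2 : ℝ) ^ ((1 : ℤ) - (r : ℤ))) ≤
        probTF F n (n + 1 - r))) := by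
  subst hq
  have hzero : ∏' j : ℕ, (1 - ((Fintype.card F : ℝ))⁻¹ ^ (j + 0)) = 0 :=
    tprod_of_exists_eq_zero ⟨0, by simp⟩
  refine ⟨fun r => ?_, fun r => tprod_one_sub_pow_mem_Icc (by positivity) inv_card_lt_one r,
    hzero, fun n r hr hrn => ⟨fun hq3 => ?_, fun hq2 => ?_⟩⟩
  · rcases Nat.eq_zero_or_pos r with rfl | hr
    · simp only [Nat.sub_zero, probTF_succ, hzero]
      exact tendsto_const_nhds
    · exact tendsto_probTF hr
  · exact (exp_neg_zpow_le_prod_one_sub_inv_pow hq3 hr _).trans (prod_le_probTF hr hrn)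
  · have hprod := prod_le_probTF (F := F) hr hrn
    rw [hq2, Nat.cast_ofNat] at hprod
    exact (exp_neg_mul_zpow_le_prod_one_sub_half_pow hr _).trans hprod
end

section
/- Fix n ∈ ℕ and let W be a random variable taking values in ℕ = {1,2,...} with probability generating function ρ(s) = E[s^W]. Consider the binomial allocation model: a random row X ∈ {0,1}^n is formed by, independently of W, throwing W balls independently and uniformly at random into the n coordinates and setting X_j = 1 if and only if coordinate j receives an odd number of balls. Let X_1, ..., X_m be m i.i.d. copies of X and let A(n,m) be the event that X_1 + ⋯ + X_m ≡ 0 (mod 2) componentwise. Then P[A(n,m)] = 2^{−n} ∑_{j=0}^n C(n,j) (ρ(1 − 2j/n))^m. -/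
open Filter Topology

open Classical in
/-- The law of a row in the binomial allocation model: the probability that the
row equals `x ∈ {0,1}^n`, where the row is obtained by throwing `W` balls
(`W` having pmf `p`) independently and uniformly into the `n` coordinates and
recording the parity of each occupancy count. -/
noncomputable def binRow (p : ℕ → ℝ) (n : ℕ) (x : Fin n → ZMod 2) : ℝ :=
  ∑' k, p k *
    ((Finset.univ.filter (fun f : Fin k → Fin n =>
        ∀ j, (x j = 1 ↔ Odd ((Finset.univ.filter (fun i => f i = j)).card)))).card : ℝ) /
      (n : ℝ) ^ k

/-- `P[A(n,m)]`: the probability that every column sum of the `m × n` matrix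
with i.i.d. rows distributed as `binRow p n` is even. -/
noncomputable def probAbin (p : ℕ → ℝ) (n m : ℕ) : ℝ :=
  ∑ M : Fin m → Fin n → ZMod 2,
    if ∀ j, (∑ i, M i j) = 0 then ∏ i, binRow p n (M i) else 0

/-!
Let `σ(a) = (-1)^a` on `ZMod 2`. Orthogonality of the characters `x ↦ σ(t ⬝ᵥ x)` of `(ZMod 2)^n`
writes the indicator of `X₁ + ⋯ + Xₘ = 0` as `2⁻ⁿ ∑ₜ ∏ᵢ σ(t ⬝ᵥ Xᵢ)`, so by independence
`P[A(n,m)] = 2⁻ⁿ ∑ₜ E[σ(t ⬝ᵥ X)]^m`. For a row built from `k` balls, `σ(t ⬝ᵥ X)` is the product over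
the balls of `σ(t_c)` at the coordinate `c` hit, hence `E[σ(t ⬝ᵥ X) | W = k] = (1 - 2|t|/n)^k` and
`E[σ(t ⬝ᵥ X)] = ρ(1 - 2|t|/n)`, where `|t|` is the Hamming weight. Grouping the `t` by weight gives
the binomial coefficients.
-/

open Finset

lemma ZMod.eq_zero_or_eq_one (a : ZMod 2) : a = 0 ∨ a = 1 := by
  revert a; decide

lemma ZMod.eq_one_iff_eq_one_iff (a b : ZMod 2) : (a = 1 ↔ b = 1) ↔ a = b := by
  revert a b; decide

lemma AddChar.map_finsetSum_eq_prod {ι A M : Type*} [AddCommMonoid A] [CommMonoid M]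
    (ψ : AddChar A M) (s : Finset ι) (f : ι → A) : ψ (∑ i ∈ s, f i) = ∏ i ∈ s, ψ (f i) := by
  induction s using Finset.cons_induction with
  | empty => simp
  | cons a s ha ih => rw [sum_cons, prod_cons, map_add_eq_mul, ih]

def signChar : AddChar (ZMod 2) ℝ where
  toFun a := if a = 0 then 1 else -1
  map_zero_eq_one' := if_pos rfl
  map_add_eq_mul' a b := by
    rcases a.eq_zero_or_eq_one with rfl | rfl <;> rcases b.eq_zero_or_eq_one with rfl | rfl <;>
      simp [show (1 : ZMod 2) + 1 = 0 from rfl]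

lemma signChar_apply (a : ZMod 2) : signChar a = 1 - 2 * if a = 1 then 1 else 0 := by
  rcases a.eq_zero_or_eq_one with rfl | rfl <;> norm_num [signChar]

lemma sum_signChar_mul (b : ZMod 2) : ∑ a, signChar (a * b) = if b = 0 then 2 else 0 := by
  rw [show (univ : Finset (ZMod 2)) = {0, 1} from rfl]
  rcases b.eq_zero_or_eq_one with rfl | rfl <;> norm_num [signChar]

section WalshTransform

variable {ι : Type*} [Fintype ι] [DecidableEq ι]

lemma ite_eq_zero_eq_sum_signChar_dotProduct (v : ι → ZMod 2) :
    (if v = 0 then 1 else 0 : ℝ) = 2⁻¹ ^ Fintype.card ι * ∑ t, signChar (t ⬝ᵥ v) := by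
  simp only [dotProduct, AddChar.map_finsetSum_eq_prod]
  rw [← Fintype.prod_sum (fun j a => signChar (a * v j))]
  simp only [sum_signChar_mul, Fintype.prod_ite_zero, prod_const, card_univ, funext_iff,
    Pi.zero_apply]
  split_ifs <;> simp

/-- For `X ~ μ` this is `E[(-1)^(t ⬝ᵥ X)]`. -/
def walshTransform (μ : (ι → ZMod 2) → ℝ) (t : ι → ZMod 2) : ℝ :=
  ∑ x, signChar (t ⬝ᵥ x) * μ x

lemma sum_ite_sum_eq_zero_prod_eq_sum_walshTransform_pow {m : ℕ} (μ : (ι → ZMod 2) → ℝ) :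
    ∑ M : Fin m → ι → ZMod 2, (if ∑ i, M i = 0 then ∏ i, μ (M i) else 0) =
      2⁻¹ ^ Fintype.card ι * ∑ t, walshTransform μ t ^ m := by
  have hterm (M : Fin m → ι → ZMod 2) : (if ∑ i, M i = 0 then ∏ i, μ (M i) else 0) =
      2⁻¹ ^ Fintype.card ι * ∑ t, ∏ i, (signChar (t ⬝ᵥ M i) * μ (M i)) := by
    rw [← boole_mul, ite_eq_zero_eq_sum_signChar_dotProduct, mul_assoc, sum_mul]
    simp_rw [dotProduct_sum, AddChar.map_finsetSum_eq_prod, prod_mul_distrib]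
  simp_rw [hterm, ← mul_sum, walshTransform, Fintype.sum_pow]
  rw [sum_comm]

lemma sum_fun_zmod_two_eq_sum_choose {M : Type*} [AddCommMonoid M] (g : ℕ → M) :
    ∑ t : ι → ZMod 2, g #{c | t c = 1} =
      ∑ j ∈ range (Fintype.card ι + 1), (Fintype.card ι).choose j • g j := by
  let e : Finset ι ≃ (ι → ZMod 2) :=
    { toFun s c := if c ∈ s then 1 else 0
      invFun t := {c | t c = 1}
      left_inv s := by ext c; by_cases c ∈ s <;> simp [*]
      right_inv t := by funext c; rcases (t c).eq_zero_or_eq_one with h | h <;> simp [h] }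
  rw [← e.sum_comp, ← card_univ, ← sum_powerset_apply_card, powerset_univ]
  exact sum_congr rfl fun s _ => congrArg (g ∘ card) (e.symm_apply_apply s)

end WalshTransform

section BallThrowing

variable {ι : Type*} [Fintype ι] [DecidableEq ι]

def parityVec {κ : Type*} [Fintype κ] (f : κ → ι) (j : ι) : ZMod 2 := #{i | f i = j}

lemma dotProduct_parityVec {κ : Type*} [Fintype κ] (t : ι → ZMod 2) (f : κ → ι) :
    t ⬝ᵥ parityVec f = ∑ i, t (f i) := by
  simp only [dotProduct, parityVec, natCast_card_filter, mul_sum, mul_ite, mul_one, mul_zero]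
  rw [sum_comm]
  simp [eq_comm]

variable (ι) in
noncomputable def ballParityLaw (k : ℕ) (x : ι → ZMod 2) : ℝ :=
  #{f : Fin k → ι | parityVec f = x} / Fintype.card ι ^ k

lemma ballParityLaw_nonneg (k : ℕ) (x : ι → ZMod 2) : 0 ≤ ballParityLaw ι k x := by
  unfold ballParityLaw; positivity

lemma ballParityLaw_le_one (k : ℕ) (x : ι → ZMod 2) : ballParityLaw ι k x ≤ 1 := by
  unfold ballParityLaw
  apply div_le_one_of_le₀ _ (by positivity)
  exact_mod_cast (card_filter_le _ _).trans (by simp)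

lemma walshTransform_ballParityLaw [Nonempty ι] (k : ℕ) (t : ι → ZMod 2) :
    walshTransform (ballParityLaw ι k) t = (1 - 2 * #{c | t c = 1} / Fintype.card ι) ^ k := by
  have hcard : (Fintype.card ι : ℝ) ≠ 0 := by positivity
  have hsum : ∑ c, signChar (t c) = Fintype.card ι - 2 * #{c | t c = 1} := by
    simp only [signChar_apply, sum_sub_distrib, ← mul_sum, sum_boole]
    simp
  have hcount : ∑ x, signChar (t ⬝ᵥ x) * #{f : Fin k → ι | parityVec f = x} =
      (∑ c, signChar (t c)) ^ k := by
    rw [Fintype.sum_pow, ← sum_fiberwise univ parityVec fun f => ∏ i, signChar (t (f i))]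
    refine sum_congr rfl fun x _ => ?_
    rw [sum_congr rfl fun f hf => by
      rw [← AddChar.map_finsetSum_eq_prod, ← dotProduct_parityVec, (mem_filter.1 hf).2]]
    simp [mul_comm]
  simp only [walshTransform, ballParityLaw, mul_div_assoc', ← sum_div, hcount, hsum]
  field_simp
  rw [div_pow, mul_div_cancel₀ _ (pow_ne_zero _ hcard)]

lemma summable_mul_ballParityLaw {p : ℕ → ℝ} (hp : Summable p) (x : ι → ZMod 2) :
    Summable fun k => p k * ballParityLaw ι k x :=
  hp.norm.of_norm_bounded fun k => by
    rw [norm_mul, Real.norm_of_nonneg (ballParityLaw_nonneg k x)]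
    exact mul_le_of_le_one_right (norm_nonneg _) (ballParityLaw_le_one k x)

lemma walshTransform_tsum_mul_ballParityLaw [Nonempty ι] {p : ℕ → ℝ} (hp : Summable p)
    (t : ι → ZMod 2) :
    walshTransform (fun x => ∑' k, p k * ballParityLaw ι k x) t =
      rho p (1 - 2 * #{c | t c = 1} / Fintype.card ι) := by
  simp_rw [walshTransform, ← tsum_mul_left]
  rw [← Summable.tsum_finsetSum fun x _ => (summable_mul_ballParityLaw hp x).mul_left _]
  simp_rw [mul_left_comm _ (p _), ← mul_sum]
  exact tsum_congr fun k => by rw [← walshTransform, walshTransform_ballParityLaw]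

end BallThrowing

lemma binRow_eq_tsum (p : ℕ → ℝ) (n : ℕ) :
    binRow p n = fun x => ∑' k, p k * ballParityLaw (Fin n) k x := by
  refine funext fun x => tsum_congr fun k => ?_
  rw [ballParityLaw, Fintype.card_fin, mul_div_assoc]
  congr 4
  ext f
  simp only [mem_filter, mem_univ, true_and, funext_iff, parityVec,
    ← ZMod.natCast_eq_one_iff_odd, ZMod.eq_one_iff_eq_one_iff]
  exact forall_congr' fun _ => eq_comm

theorem stmt11_general (n : ℕ) (hn : 1 ≤ n) (m : ℕ)
    (p : ℕ → ℝ) (hpsum : ∑' k, p k = 1) :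
    probAbin p n m =
      (2 : ℝ)⁻¹ ^ n * ∑ j ∈ Finset.range (n + 1),
        (n.choose j : ℝ) * (rho p (1 - 2 * (j : ℝ) / n)) ^ m := by
  have hp : Summable p := by
    by_contra h
    simp [tsum_eq_zero_of_not_summable h] at hpsum
  have : Nonempty (Fin n) := ⟨⟨0, hn⟩⟩
  have hrow (t : Fin n → ZMod 2) :
      walshTransform (binRow p n) t = rho p (1 - 2 * #{c | t c = 1} / n) := by
    rw [binRow_eq_tsum, walshTransform_tsum_mul_ballParityLaw hp, Fintype.card_fin]
  have hcond (M : Fin m → Fin n → ZMod 2) : (∀ j, ∑ i, M i j = 0) ↔ ∑ i, M i = 0 := by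
    simp [funext_iff, Finset.sum_apply]
  simp only [probAbin, hcond]
  rw [sum_ite_sum_eq_zero_prod_eq_sum_walshTransform_pow, Fintype.card_fin]
  simp_rw [hrow]
  rw [sum_fun_zmod_two_eq_sum_choose (fun j => rho p (1 - 2 * (j : ℝ) / n) ^ m), Fintype.card_fin]
  simp [nsmul_eq_mul]

theorem stmt11 (n : ℕ) (hn : 1 ≤ n) (m : ℕ)
    (p : ℕ → ℝ) (hpnn : ∀ k, 0 ≤ p k) (hp0 : p 0 = 0) (hpsum : ∑' k, p k = 1) :
    probAbin p n m =
      (2 : ℝ)⁻¹ ^ n * ∑ j ∈ Finset.range (n + 1),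
        (n.choose j : ℝ) * (rho p (1 - 2 * (j : ℝ) / n)) ^ m :=
  stmt11_general n hn m p hpsum
end

section
/- Fix n, m ∈ ℕ and let X_1, ..., X_m be i.i.d. random vectors in {0,1}^n with arbitrary common law, with coordinates X_{1j}, j ∈ {1,...,n}. Let A(n,m) be the event that X_1 + ⋯ + X_m ≡ 0 (mod 2) componentwise. Then P[A(n,m)] = 2^{−n} ∑_{J ⊆ {1,...,n}} ( E[(−1)^{∑_{j∈J} X_{1j}}] )^m, where the sum is over all subsets J of {1,...,n}, including the empty set. -/
/-!
The characters `x ↦ (-1) ^ ∑ j ∈ J, x j` of `(ZMod 2)ⁿ` resolve the indicator of `0`: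
`2ⁿ · [y = 0] = ∑_J ∏_{j ∈ J} (-1) ^ y j`, because this sum factors as `∏_j (1 + (-1) ^ y j)`.
Applying this to the column sums `y = X₁ + ⋯ + Xₘ` and using that each character is
multiplicative, the probability of even column sums becomes `2⁻ⁿ ∑_J E[χ_J(X₁) ⋯ χ_J(Xₘ)]`,
and independence turns each expectation into the `m`-th power of `E[χ_J(X₁)]`.
-/

open Finset

section ParityCharacters

variable {R : Type*}

lemma neg_one_pow_val_add [Ring R] (a b : ZMod 2) :
    (-1 : R) ^ (a + b).val = (-1) ^ a.val * (-1) ^ b.val := by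
  rw [ZMod.val_add, ← neg_one_pow_eq_pow_mod_two, pow_add]

lemma neg_one_pow_val_sum [CommRing R] {κ : Type*} (s : Finset κ)
    (f : κ → ZMod 2) : (-1 : R) ^ (∑ i ∈ s, f i).val = ∏ i ∈ s, (-1 : R) ^ (f i).val := by
  induction s using Finset.cons_induction with
  | empty => simp
  | cons a s _ ih => rw [sum_cons, prod_cons, neg_one_pow_val_add, ih]

lemma one_add_neg_one_pow_val [Ring R] (a : ZMod 2) :
    1 + (-1 : R) ^ a.val = if a = 0 then 2 else 0 := by
  obtain rfl | rfl : a = 0 ∨ a = 1 := by revert a; decide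
  · norm_num [one_add_one_eq_two]
  · simp [ZMod.val_one]

lemma sum_prod_neg_one_pow_val [CommRing R] {ι : Type*} [Fintype ι] [DecidableEq ι]
    (y : ι → ZMod 2) :
    ∑ J : Finset ι, ∏ j ∈ J, (-1 : R) ^ (y j).val = if y = 0 then 2 ^ Fintype.card ι else 0 := by
  rw [← powerset_univ, ← prod_one_add]
  simp only [one_add_neg_one_pow_val, Fintype.prod_ite_zero, prod_const, card_univ,
    funext_iff, Pi.zero_apply]

end ParityCharacters

lemma two_pow_card_mul_sum_even_columns {R ι κ : Type*} [CommRing R] [Fintype ι]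
    [DecidableEq ι] [Fintype κ] [DecidableEq κ] (q : (ι → ZMod 2) → R) :
    2 ^ Fintype.card ι * (∑ M : κ → ι → ZMod 2,
        if ∀ j, (∑ i, M i j) = 0 then ∏ i, q (M i) else 0) =
      ∑ J : Finset ι, (∑ x : ι → ZMod 2, q x * (-1 : R) ^ (∑ j ∈ J, (x j).val)) ^
        Fintype.card κ := by
  have column_sums (M : κ → ι → ZMod 2) :
      2 ^ Fintype.card ι * (if ∀ j, (∑ i, M i j) = 0 then ∏ i, q (M i) else 0) =
        ∑ J : Finset ι, ∏ i, q (M i) * (-1 : R) ^ (∑ j ∈ J, (M i j).val) := by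
    have indicator := sum_prod_neg_one_pow_val (R := R) (fun j ↦ ∑ i, M i j)
    simp only [funext_iff, Pi.zero_apply] at indicator
    rw [mul_ite_zero, mul_comm, ← mul_ite_zero, ← indicator, mul_sum]
    refine sum_congr rfl fun J _ ↦ ?_
    rw [prod_mul_distrib]
    congr 1
    simp only [neg_one_pow_val_sum, ← prod_pow_eq_pow_sum]
    exact prod_comm
  simp only [mul_sum, column_sums]
  rw [sum_comm]
  refine sum_congr rfl fun J _ ↦ ?_
  rw [← card_univ, ← prod_const, Fintype.prod_sum]

theorem stmt12_general (n m : ℕ) (q : (Fin n → ZMod 2) → ℝ) :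
    (∑ M : Fin m → Fin n → ZMod 2,
        if ∀ j, (∑ i, M i j) = 0 then ∏ i, q (M i) else 0) =
      (2 : ℝ)⁻¹ ^ n * ∑ J : Finset (Fin n),
        (∑ x : Fin n → ZMod 2, q x * (-1 : ℝ) ^ (∑ j ∈ J, (x j).val)) ^ m := by
  have h := two_pow_card_mul_sum_even_columns (κ := Fin m) q
  rw [Fintype.card_fin, Fintype.card_fin] at h
  rw [← h, ← mul_assoc, ← mul_pow, inv_mul_cancel₀ two_ne_zero, one_pow, one_mul]
  -- only the `Decidable (∀ j : Fin n, _)` instances differ (`Nat.decidableForallFin` here)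
  exact sum_congr rfl fun M _ ↦ by congr

theorem stmt12 (n m : ℕ) (q : (Fin n → ZMod 2) → ℝ)
    (hqnn : ∀ x, 0 ≤ q x) (hq1 : ∑ x : Fin n → ZMod 2, q x = 1) :
    (∑ M : Fin m → Fin n → ZMod 2,
        if ∀ j, (∑ i, M i j) = 0 then ∏ i, q (M i) else 0) =
      (2 : ℝ)⁻¹ ^ n * ∑ J : Finset (Fin n),
        (∑ x : Fin n → ZMod 2, q x * (-1 : ℝ) ^ (∑ j ∈ J, (x j).val)) ^ m :=
  stmt12_general n m q
end

section
/- Let Z_1, Z_2, ... be independent Poisson random variables with mean μ > 0, and let Z_1^E, Z_2^E, ... be i.i.d. random variables whose common law is that of Z_1 conditioned to be even, i.e. P[Z_1^E = k] = P[Z_1 = k | Z_1 ∈ 2ℤ]. Let π_n(m) be the probability that all n components of a multinomial (m; 1/n, ..., 1/n) random vector are even. Then π_n(m) = ( P[Z_1^E + ⋯ + Z_n^E = m] / P[Z_1 + ⋯ + Z_n = m] ) · ((1 + e^{−2μ})/2)^n. -/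
open Filter Topology

/-- `P[ξ_1 + ⋯ + ξ_n = m]` for i.i.d. `ℕ`-valued random variables with pmf `f`:
the sum over all tuples of values summing to `m` of the product of the pmf.
(Each value in such a tuple is at most `m`, so it suffices to sum over
tuples valued in `{0, …, m}`.) -/
noncomputable def sumDist (f : ℕ → ℝ) (n m : ℕ) : ℝ :=
  ∑ g ∈ Finset.univ.filter
      (fun g : Fin n → Fin (m + 1) => (∑ i, (g i : ℕ)) = m),
    ∏ i, f (g i)

/-!
For occupancies `k` of `n` urns with `∑ k = m`, the Poisson weights factor as
`∏ j e^{-μ} μ^{k j} / (k j)! = e^{-nμ} μ^m / m! * multinomial k`, and `multinomial k` is the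
number of ways to throw `m` labelled balls into the urns with occupancies `k`.
Hence `P[Z_1 + ⋯ + Z_n = m] = e^{-nμ} μ^m / m! * n^m`, while
`P[Z_1^E + ⋯ + Z_n^E = m] = (e^{-μ} / c)^n μ^m / m! * #{throws with all occupancies even}`,
where `c = (1 + e^{-2μ}) / 2`; the ratio of the two, times `c^n`, is `π_n(m)`.
-/

open Finset MvPolynomial

section Occupancy

variable {α β : Type*} [Fintype α] [Fintype β] [DecidableEq β]

def occupancy (f : α → β) (j : β) : ℕ := #{i | f i = j}

theorem sum_occupancy (f : α → β) : ∑ j, occupancy f j = Fintype.card α :=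
  (card_eq_sum_card_fiberwise fun i _ => mem_univ (f i)).symm.trans card_univ

theorem prod_X_comp_eq_monomial (f : α → β) :
    ∏ i, (X (f i) : MvPolynomial β ℕ) =
      monomial (Finsupp.equivFunOnFinite.symm (occupancy f)) 1 := by
  rw [monomial_eq, Finsupp.prod_fintype _ _ fun _ => pow_zero _, C_1, one_mul, prod_comp,
    prod_subset (subset_univ _)]
  · rfl
  · intro j _ hj
    rw [filter_false_of_mem (by simpa using hj), card_empty, pow_zero]

theorem card_filter_occupancy_eq_multinomial [DecidableEq α] (k : β → ℕ)
    (hk : ∑ j, k j = Fintype.card α) :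
    #{f : α → β | occupancy f = k} = Nat.multinomial univ k := by
  -- compare the coefficients of `X ^ k` in `(∑ j, X j) ^ card α = ∏ i : α, ∑ j, X j`
  have h := congrArg (coeff (Finsupp.equivFunOnFinite.symm k))
    (Fintype.prod_sum fun (_ : α) (j : β) => (X j : MvPolynomial β ℕ))
  rw [prod_const, card_univ, coeff_sum_X_pow_of_fintype, coeff_sum] at h
  simp only [prod_X_comp_eq_monomial, coeff_monomial, Nat.cast_id,
    Finsupp.equivFunOnFinite.symm.injective.eq_iff] at h
  rw [Finsupp.sum_fintype _ _ fun _ => rfl, Finsupp.coe_equivFunOnFinite_symm, if_pos hk,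
    ← Finsupp.multinomial_of_support_subset (subset_univ _)] at h
  rw [card_filter, ← h, Finsupp.coe_equivFunOnFinite_symm]

theorem sum_comp_occupancy {M : Type*} [AddCommMonoid M] [DecidableEq α] (W : (β → ℕ) → M) :
    ∑ f : α → β, W (occupancy f) =
      ∑ k ∈ piAntidiag univ (Fintype.card α), Nat.multinomial univ k • W k := by
  rw [← sum_fiberwise_of_maps_to (g := occupancy)
    fun f _ => mem_piAntidiag.2 ⟨sum_occupancy f, fun j _ => mem_univ j⟩]
  refine sum_congr rfl fun k hk => ?_
  rw [sum_congr rfl fun f hf => by rw [(mem_filter.1 hf).2], sum_const,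
    card_filter_occupancy_eq_multinomial k (mem_piAntidiag.1 hk).1]

end Occupancy

theorem prod_pow_div_factorial {ι K : Type*} [Field K] [CharZero K] (s : Finset ι)
    (k : ι → ℕ) (x : K) :
    ∏ i ∈ s, x ^ k i / (k i).factorial =
      x ^ (∑ i ∈ s, k i) / (∑ i ∈ s, k i).factorial * Nat.multinomial s k := by
  rw [← Nat.multinomial_spec s k, prod_div_distrib, prod_pow_eq_pow_sum]
  push_cast
  have : ∏ i ∈ s, ((k i).factorial : K) ≠ 0 :=
    prod_ne_zero_iff.2 fun i _ => Nat.cast_ne_zero.2 (Nat.factorial_ne_zero _)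
  have : (Nat.multinomial s k : K) ≠ 0 := Nat.cast_ne_zero.2 (Nat.multinomial_pos s k).ne'
  field_simp

theorem sumDist_eq_sum_piAntidiag (f : ℕ → ℝ) (n m : ℕ) :
    sumDist f n m = ∑ k ∈ piAntidiag (univ : Finset (Fin n)) m, ∏ i, f (k i) := by
  have hle : ∀ k ∈ piAntidiag (univ : Finset (Fin n)) m, ∀ i, k i ≤ m := fun k hk i =>
    (single_le_sum (fun _ _ => Nat.zero_le _) (mem_univ i)).trans_eq (mem_piAntidiag.1 hk).1
  refine sum_nbij' (fun (g : Fin n → Fin (m + 1)) i => (g i : ℕ))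
    (fun k i => (⟨min (k i) m, by omega⟩ : Fin (m + 1))) ?_ ?_ ?_ ?_ fun _ _ => rfl
  · intro g hg
    exact mem_piAntidiag.2 ⟨(mem_filter.1 hg).2, fun i _ => mem_univ i⟩
  · intro k hk
    refine mem_filter.2 ⟨mem_univ _, ?_⟩
    rw [sum_congr rfl fun i _ => min_eq_left (hle k hk i)]
    exact (mem_piAntidiag.1 hk).1
  · intro g _
    ext i
    exact min_eq_left (Nat.lt_succ_iff.1 (g i).2)
  · intro k hk
    ext i
    exact min_eq_left (hle k hk i)

theorem sumDist_const_mul (a : ℝ) (f : ℕ → ℝ) (n m : ℕ) :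
    sumDist (fun k => a * f k) n m = a ^ n * sumDist f n m := by
  simp only [sumDist, prod_mul_distrib, prod_const, card_univ, Fintype.card_fin, mul_sum]

theorem sumDist_mul_pow_div_factorial (w : ℕ → ℝ) (x : ℝ) (n m : ℕ) :
    sumDist (fun k => w k * (x ^ k / k.factorial)) n m =
      x ^ m / m.factorial * ∑ f : Fin m → Fin n, ∏ j, w (occupancy f j) := by
  rw [sumDist_eq_sum_piAntidiag, sum_comp_occupancy fun k => ∏ j, w (k j), Fintype.card_fin,
    mul_sum]
  refine sum_congr rfl fun k hk => ?_
  rw [prod_mul_distrib, prod_pow_div_factorial, (mem_piAntidiag.1 hk).1, nsmul_eq_mul]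
  ring

theorem stmt13_general (μ : ℝ) (hμ : 0 < μ) (n m : ℕ) :
    piProb n m =
      (sumDist (fun k => if Even k then
            (Real.exp (-μ) * μ ^ k / (Nat.factorial k : ℝ)) /
              ((1 + Real.exp (-2 * μ)) / 2) else 0) n m /
        sumDist (fun k => Real.exp (-μ) * μ ^ k / (Nat.factorial k : ℝ)) n m) *
      ((1 + Real.exp (-2 * μ)) / 2) ^ n := by
  have hc : (1 + Real.exp (-2 * μ)) / 2 ≠ 0 := by positivity
  set c := (1 + Real.exp (-2 * μ)) / 2
  have hpoisson : (fun k => Real.exp (-μ) * μ ^ k / (Nat.factorial k : ℝ)) =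
      fun k => Real.exp (-μ) * (1 * (μ ^ k / k.factorial)) := by
    funext k; ring
  have heven :
      (fun k => if Even k then (Real.exp (-μ) * μ ^ k / (Nat.factorial k : ℝ)) / c else 0) =
        fun k => Real.exp (-μ) / c * ((if Even k then 1 else 0) * (μ ^ k / k.factorial)) := by
    funext k; split_ifs <;> ring
  have hcount : ∑ f : Fin m → Fin n, ∏ j, (if Even (occupancy f j) then (1 : ℝ) else 0) =
      #{f : Fin m → Fin n | ∀ j, Even (occupancy f j)} := by
    simp only [Fintype.prod_boole, natCast_card_filter]
    -- the two sides decide `∀ j, _` with different (but equal) instances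
    congr!
  rw [hpoisson, heven, sumDist_const_mul, sumDist_const_mul, sumDist_mul_pow_div_factorial,
    sumDist_mul_pow_div_factorial, hcount]
  simp only [prod_const_one, sum_const, card_univ, Fintype.card_fun, Fintype.card_fin, nsmul_one,
    Nat.cast_pow]
  have hμm : μ ^ m / m.factorial ≠ 0 := by positivity
  change (#{f : Fin m → Fin n | ∀ j, Even (occupancy f j)} : ℝ) / (n : ℝ) ^ m = _
  rw [div_pow]
  field_simp

theorem stmt13 (μ : ℝ) (hμ : 0 < μ) (n m : ℕ) (hn : 1 ≤ n) :
    piProb n m =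
      (sumDist (fun k => if Even k then
            (Real.exp (-μ) * μ ^ k / (Nat.factorial k : ℝ)) /
              ((1 + Real.exp (-2 * μ)) / 2) else 0) n m /
        sumDist (fun k => Real.exp (-μ) * μ ^ k / (Nat.factorial k : ℝ)) n m) *
      ((1 + Real.exp (-2 * μ)) / 2) ^ n :=
  stmt13_general μ hμ n m
end

section
/- For each integer r ≥ 3, let h_r(x) = −log(1−x)/(r x^{r−1}) for x ∈ (0,1), let α♯_r = inf_{x∈(0,1)} h_r(x), let x*_r be the unique solution in (0,1) of ψ_r(x) = 0 where ψ_r(x) = x + (1 − ((r−1)/r) x) log(1−x), and let ᾱ_r = h_r(x*_r) = −log(1 − x*_r)/(r (x*_r)^{r−1}). Then, as r → ∞: α♯_r → 0, and 1 − ᾱ_r ∼ e^{−r}; moreover x*_r = 1 − e^{−r} − r² e^{−2r} + O(r⁴ e^{−3r}). -/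
open Filter Topology Asymptotics

/-- `h_r(x) = -log(1-x) / (r x^(r-1))`. -/
noncomputable def hFix (r : ℕ) (x : ℝ) : ℝ :=
  -Real.log (1 - x) / ((r : ℝ) * x ^ (r - 1))

/-- `ψ_r(x) = x + (1 - ((r-1)/r) x) log(1-x)`. -/
noncomputable def psiFix (r : ℕ) (x : ℝ) : ℝ :=
  x + (1 - (((r : ℝ) - 1) / (r : ℝ)) * x) * Real.log (1 - x)

/-- `α♯_r = inf_{x ∈ (0,1)} h_r(x)`. -/
noncomputable def alphaSharpFix (r : ℕ) : ℝ := sInf (hFix r '' Set.Ioo 0 1)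

/-!
Write `x = 1 - ε`, `E = e^{-r}` and `a = r² E`. Then
`r ψ_r(1 - E(1 + u)) = (1 + (r - 1) ε) log (1 + u) - a (1 + u)`, which is positive at
`u = a + 3a²` and negative at `u = a - 3a²` as soon as `a ≤ 1/20`; by the intermediate value
theorem and uniqueness of the root, `|ε - E(1 + a)| ≤ 3 E a²`, which is the expansion of `x*_r`.
At the root, `ψ_r = 0` turns `h_r` into `1 / D` with `D = (1 + (r - 1) ε)(1 - ε)^{r-2}`, and
Bernoulli-type bounds give `D = 1 + ε + O(r² ε²)`, so `1 - ᾱ_r = (D - 1) / D ∼ ε ∼ E`.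
Finally `α♯_r ≤ h_r(1 - 1/r) ≤ e log r / r`, because `(1 - 1/r)^{r-1} ≥ e⁻¹`.
-/

open Real

lemma hFix_nonneg (r : ℕ) {x : ℝ} (hx : x ∈ Set.Ioo (0 : ℝ) 1) : 0 ≤ hFix r x := by
  have hlog : log (1 - x) ≤ 0 := log_nonpos (by linarith [hx.2]) (by linarith [hx.1])
  exact div_nonneg (neg_nonneg.2 hlog) (by have := hx.1; positivity)

lemma alphaSharpFix_nonneg (r : ℕ) : 0 ≤ alphaSharpFix r :=
  sInf_nonneg (by rintro _ ⟨x, hx, rfl⟩; exact hFix_nonneg r hx)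

lemma alphaSharpFix_le_hFix (r : ℕ) {x : ℝ} (hx : x ∈ Set.Ioo (0 : ℝ) 1) :
    alphaSharpFix r ≤ hFix r x :=
  csInf_le ⟨0, by rintro _ ⟨y, hy, rfl⟩; exact hFix_nonneg r hy⟩ ⟨x, hx, rfl⟩

lemma alphaSharpFix_succ_le {n : ℕ} (hn : n ≠ 0) :
    alphaSharpFix (n + 1) ≤ exp 1 * (log (n + 1) / (n + 1)) := by
  set x : ℝ := (1 + (n : ℝ)⁻¹)⁻¹
  have hx : x ∈ Set.Ioo (0 : ℝ) 1 := by
    have : (0 : ℝ) < (n : ℝ)⁻¹ := by positivity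
    exact ⟨by positivity, inv_lt_one_of_one_lt₀ (by linarith)⟩
  have hpow : (exp 1)⁻¹ ≤ x ^ n := by
    rw [inv_pow]
    exact inv_anti₀ (by positivity) one_add_inv_pow_le_exp
  have h1x : 1 - x = (n + 1 : ℝ)⁻¹ := by
    simp only [x]
    field_simp
    ring
  calc alphaSharpFix (n + 1) ≤ hFix (n + 1) x := alphaSharpFix_le_hFix _ hx
    _ = log (n + 1) / ((n + 1) * x ^ n) := by simp [hFix, h1x, log_inv]
    _ ≤ log (n + 1) / ((n + 1) * (exp 1)⁻¹) := by
      gcongr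
      exact log_nonneg (by simp)
    _ = exp 1 * (log (n + 1) / (n + 1)) := by field_simp

lemma tendsto_alphaSharpFix : Tendsto alphaSharpFix atTop (𝓝 0) := by
  rw [← tendsto_add_atTop_iff_nat 1]
  have hlog : Tendsto (fun n : ℕ => log ((n : ℝ) + 1) / ((n : ℝ) + 1)) atTop (𝓝 0) :=
    isLittleO_log_id_atTop.tendsto_div_nhds_zero.comp
      (tendsto_atTop_add_const_right _ 1 tendsto_natCast_atTop_atTop)
  refine tendsto_of_tendsto_of_tendsto_of_le_of_le' tendsto_const_nhds
    (by simpa using hlog.const_mul (exp 1)) (.of_forall fun n => alphaSharpFix_nonneg _) ?_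
  filter_upwards [eventually_ne_atTop 0] with n hn
  simpa using alphaSharpFix_succ_le hn

lemma natCast_mul_psiFix_one_sub_exp_neg_mul {r : ℕ} (hr : r ≠ 0) {u : ℝ} (hu : -1 < u) :
    r * psiFix r (1 - exp (-r) * (1 + u)) =
      (1 + (r - 1) * (exp (-r) * (1 + u))) * log (1 + u) - r ^ 2 * exp (-r) * (1 + u) := by
  have hlog : log (exp (-r) * (1 + u)) = -r + log (1 + u) := by
    rw [log_mul (exp_pos _).ne' (by linarith), log_exp]
  simp only [psiFix, sub_sub_cancel, hlog]
  field_simp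
  ring

lemma continuousOn_psiFix (r : ℕ) : ContinuousOn (psiFix r) (Set.Iio 1) :=
  continuousOn_id.add <| (continuousOn_const.sub (continuousOn_const.mul continuousOn_id)).mul <|
    (continuousOn_const.sub continuousOn_id).log fun _ hx => (sub_pos.2 hx).ne'

lemma psiFix_pos_of_sq_mul_exp_neg_le {r : ℕ} (hr : 1 ≤ r)
    (ha : (r : ℝ) ^ 2 * exp (-r) ≤ 1 / 20) :
    0 < psiFix r (1 - exp (-r) * (1 + (r ^ 2 * exp (-r) + 3 * (r ^ 2 * exp (-r)) ^ 2))) := by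
  set E := exp (-(r : ℝ))
  set a := (r : ℝ) ^ 2 * E
  set u := a + 3 * a ^ 2
  have hr' : (1 : ℝ) ≤ r := by exact_mod_cast hr
  have ha0 : 0 < a := by positivity
  have hu0 : 0 < u := by positivity
  have hlog : u / (1 + u) ≤ log (1 + u) := by
    have := one_sub_inv_le_log_of_pos (x := 1 + u) (by linarith)
    rwa [show 1 - (1 + u)⁻¹ = u / (1 + u) by field_simp; ring] at this
  have hcorr : 0 ≤ (r - 1) * (E * (1 + u)) * log (1 + u) := by
    have := log_nonneg (by linarith : (1 : ℝ) ≤ 1 + u)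
    have : (0 : ℝ) ≤ r - 1 := by linarith
    positivity
  have hmain : a * (1 + u) < u / (1 + u) := by
    have hu1 : u ≤ 2 * a := by nlinarith
    have hu2 : u ^ 2 ≤ 4 * a ^ 2 := by nlinarith [mul_le_mul hu1 hu1 hu0.le (by positivity)]
    have hgap : 0 < a - 6 * a ^ 2 - u ^ 2 := by nlinarith
    rw [lt_div_iff₀ (by linarith)]
    nlinarith [mul_pos ha0 hgap]
  have key := natCast_mul_psiFix_one_sub_exp_neg_mul (by omega : r ≠ 0) (by linarith : -1 < u)
  have : 0 < (r : ℝ) * psiFix r (1 - E * (1 + u)) := by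
    rw [key]
    nlinarith
  exact pos_of_mul_pos_right this (by positivity)

lemma psiFix_neg_of_sq_mul_exp_neg_le {r : ℕ} (hr : 1 ≤ r)
    (ha : (r : ℝ) ^ 2 * exp (-r) ≤ 1 / 20) :
    psiFix r (1 - exp (-r) * (1 + (r ^ 2 * exp (-r) - 3 * (r ^ 2 * exp (-r)) ^ 2))) < 0 := by
  set E := exp (-(r : ℝ))
  set a := (r : ℝ) ^ 2 * E
  set u := a - 3 * a ^ 2
  have hr' : (1 : ℝ) ≤ r := by exact_mod_cast hr
  have ha0 : 0 < a := by positivity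
  have hu0 : 0 ≤ u := by nlinarith
  have hu1 : u ≤ 1 := by nlinarith
  have hlog : log (1 + u) ≤ u := by linarith [log_le_sub_one_of_pos (by linarith : 0 < 1 + u)]
  have hcorr : (r - 1) * (E * (1 + u)) ≤ a := by
    have : ((r : ℝ) - 1) * (1 + u) ≤ r ^ 2 := by nlinarith
    have := mul_le_mul_of_nonneg_left this (exp_pos (-(r : ℝ))).le
    simp only [a]
    linarith
  have hfac : 0 ≤ 1 + (r - 1) * (E * (1 + u)) := by
    have : (0 : ℝ) ≤ r - 1 := by linarith
    positivity
  have key := natCast_mul_psiFix_one_sub_exp_neg_mul (by omega : r ≠ 0) (by linarith : -1 < u)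
  have : (r : ℝ) * psiFix r (1 - E * (1 + u)) < 0 := by
    rw [key]
    nlinarith [mul_le_mul_of_nonneg_left hlog hfac, mul_le_mul_of_nonneg_right hcorr hu0]
  exact neg_of_mul_neg_right this (by positivity)

lemma abs_one_sub_sub_le_of_psiFix_root_unique {r : ℕ} (hr : 1 ≤ r)
    (ha : (r : ℝ) ^ 2 * exp (-r) ≤ 1 / 20) {x : ℝ}
    (huniq : ∀ y ∈ Set.Ioo (0 : ℝ) 1, psiFix r y = 0 → y = x) :
    |1 - x - exp (-r) * (1 + r ^ 2 * exp (-r))| ≤ 3 * exp (-r) * (r ^ 2 * exp (-r)) ^ 2 := by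
  have hpos := psiFix_pos_of_sq_mul_exp_neg_le hr ha
  have hneg := psiFix_neg_of_sq_mul_exp_neg_le hr ha
  set E := exp (-(r : ℝ))
  set a := (r : ℝ) ^ 2 * E
  have hE0 : 0 < E := exp_pos _
  have hEa : E ≤ a := le_mul_of_one_le_left hE0.le (one_le_pow₀ (by exact_mod_cast hr))
  have ha0 : 0 < a := by positivity
  set p := 1 - E * (1 + (a + 3 * a ^ 2)) with hp_def
  set q := 1 - E * (1 + (a - 3 * a ^ 2)) with hq_def
  have hp : 0 < p := by nlinarith
  have hq : q < 1 := by nlinarith [mul_pos hE0 (show 0 < 1 + (a - 3 * a ^ 2) by nlinarith)]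
  have hpq : p ≤ q := by nlinarith
  obtain ⟨c, hc, hc0⟩ : (0 : ℝ) ∈ psiFix r '' Set.Icc p q :=
    intermediate_value_Icc' hpq ((continuousOn_psiFix r).mono fun y hy => hy.2.trans_lt hq)
      ⟨hneg.le, hpos.le⟩
  obtain rfl := huniq c ⟨hp.trans_le hc.1, hc.2.trans_lt hq⟩ hc0
  rw [abs_le]
  constructor <;> nlinarith [hc.1, hc.2]

lemma abs_one_add_mul_mul_one_sub_pow_sub_le (n : ℕ) {ε : ℝ} (h0 : 0 ≤ ε) (h1 : ε ≤ 1) :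
    |(1 + (n + 1) * ε) * (1 - ε) ^ n - (1 + ε)| ≤ (n + 1) ^ 2 * ε ^ 2 := by
  have hP0 : 0 ≤ (1 - ε) ^ n := pow_nonneg (by linarith) n
  have hlower : 1 - n * ε ≤ (1 - ε) ^ n := by
    simpa [← sub_eq_add_neg] using one_add_mul_le_pow (by linarith : (-2 : ℝ) ≤ -ε) n
  have hupper : (1 - ε) ^ n * (1 + n * ε) ≤ 1 := calc
    (1 - ε) ^ n * (1 + n * ε) ≤ (1 - ε) ^ n * (1 + ε) ^ n :=
      mul_le_mul_of_nonneg_left (one_add_mul_le_pow (by linarith) n) hP0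
    _ = (1 - ε ^ 2) ^ n := by rw [← mul_pow]; ring
    _ ≤ 1 := pow_le_one₀ (by nlinarith) (by nlinarith)
  have hn : (0 : ℝ) ≤ n := n.cast_nonneg
  rw [abs_le]
  constructor
  · nlinarith [mul_le_mul_of_nonneg_left hlower (by positivity : (0 : ℝ) ≤ 1 + (n + 1) * ε)]
  · nlinarith [mul_le_mul_of_nonneg_left hupper (by positivity : (0 : ℝ) ≤ 1 + ε),
      mul_nonneg (mul_nonneg hn (sq_nonneg ε)) hP0]

lemma hFix_eq_of_psiFix_eq_zero {r : ℕ} (hr : 2 ≤ r) {x : ℝ} (hx : x ∈ Set.Ioo (0 : ℝ) 1)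
    (hψ : psiFix r x = 0) : hFix r x = ((1 + (r - 1) * (1 - x)) * x ^ (r - 2))⁻¹ := by
  obtain ⟨hx0, hx1⟩ := hx
  have hr' : (2 : ℝ) ≤ r := by exact_mod_cast hr
  have hc : 0 < 1 + (r - 1) * (1 - x) := by nlinarith
  have hlog : log (1 - x) = -(r * x) / (1 + (r - 1) * (1 - x)) := by
    rw [eq_div_iff hc.ne']
    simp only [psiFix] at hψ
    field_simp at hψ
    linear_combination hψ
  have hpow : x ^ (r - 1) = x ^ (r - 2) * x := by
    rw [← pow_succ]; congr 1; omega
  rw [hFix, hlog, hpow]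
  field_simp

lemma isEquivalent_of_isBigO_mul {α : Type*} {l : Filter α} {u v w : α → ℝ}
    (h : (u - v) =O[l] (w * v)) (hw : Tendsto w l (𝓝 0)) : u ~[l] v := by
  have := ((isLittleO_one_iff ℝ).2 hw).mul_isBigO (isBigO_refl v l)
  simp only [one_mul] at this
  exact h.trans_isLittleO this

lemma tendsto_natCast_pow_mul_exp_neg (k : ℕ) :
    Tendsto (fun r : ℕ => (r : ℝ) ^ k * exp (-r)) atTop (𝓝 0) :=
  (tendsto_pow_mul_exp_neg_atTop_nhds_zero k).comp tendsto_natCast_atTop_atTop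

lemma one_add_mul_mul_one_sub_pow_sub_one_isEquivalent {ε : ℕ → ℝ}
    (h01 : ∀ᶠ r in atTop, ε r ∈ Set.Icc (0 : ℝ) 1)
    (hε : Tendsto (fun r : ℕ => (r : ℝ) ^ 2 * ε r) atTop (𝓝 0)) :
    (fun r : ℕ => (1 + (r - 1) * ε r) * (1 - ε r) ^ (r - 2) - 1) ~[atTop] ε := by
  refine isEquivalent_of_isBigO_mul (IsBigO.of_bound 1 ?_) hε
  filter_upwards [h01, eventually_ge_atTop 2] with r ⟨h0, h1⟩ hr
  have hcast : ((r - 2 : ℕ) : ℝ) + 1 = r - 1 := by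
    rw [Nat.cast_sub hr]; ring
  have hbound := abs_one_add_mul_mul_one_sub_pow_sub_le (r - 2) h0 h1
  rw [hcast] at hbound
  have hr1 : ((r : ℝ) - 1) ^ 2 ≤ r ^ 2 := by
    have : (2 : ℝ) ≤ r := by exact_mod_cast hr
    nlinarith
  simp only [Pi.sub_apply, Pi.mul_apply, norm_eq_abs, one_mul]
  rw [abs_of_nonneg (by positivity : 0 ≤ (r : ℝ) ^ 2 * ε r * ε r), sub_sub]
  nlinarith [mul_le_mul_of_nonneg_right hr1 (sq_nonneg (ε r))]

section RootSequence

variable {xs : ℕ → ℝ}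

lemma eventually_abs_one_sub_sub_le
    (huniq : ∀ r : ℕ, 3 ≤ r → ∀ y ∈ Set.Ioo (0 : ℝ) 1, psiFix r y = 0 → y = xs r) :
    ∀ᶠ r : ℕ in atTop, |1 - xs r - exp (-r) * (1 + r ^ 2 * exp (-r))| ≤
      3 * exp (-r) * (r ^ 2 * exp (-r)) ^ 2 := by
  filter_upwards [eventually_ge_atTop 3,
    (tendsto_natCast_pow_mul_exp_neg 2).eventually (ge_mem_nhds (by norm_num : (0 : ℝ) < 1 / 20))]
    with r hr ha
  exact abs_one_sub_sub_le_of_psiFix_root_unique (by omega) ha (huniq r hr)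

lemma isBigO_root_sub
    (huniq : ∀ r : ℕ, 3 ≤ r → ∀ y ∈ Set.Ioo (0 : ℝ) 1, psiFix r y = 0 → y = xs r) :
    (fun r : ℕ => xs r - (1 - exp (-r) - r ^ 2 * exp (-2 * r))) =O[atTop]
      (fun r : ℕ => (r : ℝ) ^ 4 * exp (-3 * r)) := by
  refine IsBigO.of_bound 3 ?_
  filter_upwards [eventually_abs_one_sub_sub_le huniq] with r h
  have he2 : exp (-2 * r) = exp (-r) ^ 2 := by rw [← exp_nat_mul]; ring_nf
  have he3 : exp (-3 * r) = exp (-r) ^ 3 := by rw [← exp_nat_mul]; ring_nf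
  rw [norm_eq_abs, norm_eq_abs, he2, he3,
    show xs r - (1 - exp (-r) - r ^ 2 * exp (-r) ^ 2) =
      -(1 - xs r - exp (-r) * (1 + r ^ 2 * exp (-r))) by ring, abs_neg,
    abs_of_nonneg (by positivity : (0 : ℝ) ≤ r ^ 4 * exp (-r) ^ 3)]
  exact h.trans_eq (by ring)

lemma one_sub_root_isEquivalent
    (huniq : ∀ r : ℕ, 3 ≤ r → ∀ y ∈ Set.Ioo (0 : ℝ) 1, psiFix r y = 0 → y = xs r) :
    (fun r : ℕ => 1 - xs r) ~[atTop] (fun r : ℕ => exp (-r)) := by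
  refine isEquivalent_of_isBigO_mul (w := fun r : ℕ => (r : ℝ) ^ 2 * exp (-r))
    (IsBigO.of_bound 2 ?_) (tendsto_natCast_pow_mul_exp_neg 2)
  filter_upwards [eventually_abs_one_sub_sub_le huniq,
    (tendsto_natCast_pow_mul_exp_neg 2).eventually (ge_mem_nhds (by norm_num : (0 : ℝ) < 1 / 3))]
    with r h ha
  have hE : 0 < exp (-(r : ℝ)) := exp_pos _
  simp only [Pi.sub_apply, Pi.mul_apply, norm_eq_abs] at h ha ⊢
  rw [abs_of_nonneg (by positivity : (0 : ℝ) ≤ r ^ 2 * exp (-r) * exp (-r))]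
  rw [abs_le] at h ⊢
  constructor <;> nlinarith [mul_le_mul_of_nonneg_left ha (by positivity :
    (0 : ℝ) ≤ 3 * exp (-r) * (r ^ 2 * exp (-r)))]

lemma one_sub_hFix_root_isEquivalent
    (hroot : ∀ r : ℕ, 3 ≤ r → xs r ∈ Set.Ioo (0 : ℝ) 1 ∧ psiFix r (xs r) = 0 ∧
      ∀ y ∈ Set.Ioo (0 : ℝ) 1, psiFix r y = 0 → y = xs r) :
    (fun r : ℕ => 1 - hFix r (xs r)) ~[atTop] (fun r : ℕ => exp (-r)) := by
  set ε : ℕ → ℝ := fun r => 1 - xs r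
  set D : ℕ → ℝ := fun r => (1 + (r - 1) * ε r) * xs r ^ (r - 2)
  have hε : ε ~[atTop] fun r : ℕ => exp (-r) :=
    one_sub_root_isEquivalent fun r hr => (hroot r hr).2.2
  have hε0 : Tendsto ε atTop (𝓝 0) :=
    hε.symm.tendsto_nhds (by simpa using tendsto_natCast_pow_mul_exp_neg 0)
  have hD : (D - 1) ~[atTop] ε := by
    convert one_add_mul_mul_one_sub_pow_sub_one_isEquivalent (ε := ε) ?_ ?_ using 1
    · ext r
      simp only [D, ε, Pi.sub_apply, Pi.one_apply, sub_sub_cancel]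
    · filter_upwards [eventually_ge_atTop 3] with r hr
      obtain ⟨hx0, hx1⟩ := (hroot r hr).1
      exact ⟨by linarith, by linarith⟩
    · exact ((IsEquivalent.refl (u := fun r : ℕ => (r : ℝ) ^ 2)).mul hε).symm.tendsto_nhds
        (tendsto_natCast_pow_mul_exp_neg 2)
  have hD1 : Tendsto D atTop (𝓝 1) := by
    simpa using (hD.symm.tendsto_nhds hε0).add_const 1
  have hh : (D - 1) / D =ᶠ[atTop] fun r : ℕ => 1 - hFix r (xs r) := by
    filter_upwards [eventually_ge_atTop 3] with r hr
    obtain ⟨hx, hψ, -⟩ := hroot r hr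
    have hDpos : 0 < D r := by
      have : (1 : ℝ) ≤ r := by exact_mod_cast (by omega : 1 ≤ r)
      have : 0 ≤ ε r := by linarith [hx.2]
      have := hx.1
      positivity
    rw [hFix_eq_of_psiFix_eq_zero (by omega) hx hψ]
    change (D r - 1) / D r = 1 - (D r)⁻¹
    field_simp
  have hDD : ((D - 1) / D) ~[atTop] (D - 1) := by
    simpa using (IsEquivalent.refl (u := D - 1)).div
      ((isEquivalent_const_iff_tendsto one_ne_zero).2 hD1)
  exact ((hDD.trans hD).trans hε).congr_left hh

end RootSequence

theorem stmt15 (xs : ℕ → ℝ)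
    (hroot : ∀ r : ℕ, 3 ≤ r → xs r ∈ Set.Ioo (0 : ℝ) 1 ∧ psiFix r (xs r) = 0 ∧
      ∀ y ∈ Set.Ioo (0 : ℝ) 1, psiFix r y = 0 → y = xs r) :
    Filter.Tendsto (fun r : ℕ => alphaSharpFix r) atTop (𝓝 0) ∧
    (fun r : ℕ => 1 - hFix r (xs r)) ~[atTop] (fun r : ℕ => Real.exp (-(r : ℝ))) ∧
    (fun r : ℕ => xs r -
        (1 - Real.exp (-(r : ℝ)) - (r : ℝ) ^ 2 * Real.exp (-2 * (r : ℝ)))) =O[atTop]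
      (fun r : ℕ => (r : ℝ) ^ 4 * Real.exp (-3 * (r : ℝ))) := by
  exact ⟨tendsto_alphaSharpFix, one_sub_hFix_root_isEquivalent hroot,
    isBigO_root_sub fun r hr => (hroot r hr).2.2⟩
end

section
/- Let r ≥ 3 be an integer and define ψ_r(x) = x + (1 − ((r−1)/r) x) log(1−x) for x ∈ (0,1). Then ψ_r has exactly one root in (0,1), and this root lies in the interval ((r−2)/(r−1), 1); moreover ψ_r(x) > 0 for x ∈ (0, x*_r) and ψ_r(x) < 0 for x ∈ (x*_r, 1), where x*_r denotes the root. -/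
open Real Set

lemma strictMonoOn_of_hasDerivAt_pos {D : Set ℝ} (hD : Convex ℝ D) {f f' : ℝ → ℝ}
    (hf : ∀ x ∈ D, HasDerivAt f (f' x) x) (hf' : ∀ x ∈ interior D, 0 < f' x) :
    StrictMonoOn f D :=
  strictMonoOn_of_hasDerivWithinAt_pos hD
    (fun x hx => (hf x hx).continuousAt.continuousWithinAt)
    (fun x hx => (hf x (interior_subset hx)).hasDerivWithinAt) hf'

lemma strictAntiOn_of_hasDerivAt_neg {D : Set ℝ} (hD : Convex ℝ D) {f f' : ℝ → ℝ}
    (hf : ∀ x ∈ D, HasDerivAt f (f' x) x) (hf' : ∀ x ∈ interior D, f' x < 0) :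
    StrictAntiOn f D :=
  strictAntiOn_of_hasDerivWithinAt_neg hD
    (fun x hx => (hf x hx).continuousAt.continuousWithinAt)
    (fun x hx => (hf x (interior_subset hx)).hasDerivWithinAt) hf'

lemma StrictAntiOn.strictConcaveOn_of_hasDerivAt {D : Set ℝ} (hD : Convex ℝ D)
    {f f' : ℝ → ℝ} (hf : ∀ x ∈ D, HasDerivAt f (f' x) x) (hf' : StrictAntiOn f' D) :
    StrictConcaveOn ℝ D f :=
  StrictAntiOn.strictConcaveOn_of_deriv hD
    (fun x hx => (hf x hx).continuousAt.continuousWithinAt)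
    ((hf'.mono interior_subset).congr fun x hx => (hf x (interior_subset hx)).deriv.symm)

namespace StrictConcaveOn

variable {s : Set ℝ} {f : ℝ → ℝ} {p x y : ℝ}

lemma pos_of_mem_Ioo (hf : StrictConcaveOn ℝ s f) (hp : p ∈ s) (hx : x ∈ s)
    (hy : y ∈ Ioo p x) (hfp : 0 ≤ f p) (hfx : 0 ≤ f x) : 0 < f y := by
  have hpx : p < x := hy.1.trans hy.2
  exact (le_min hfp hfx).trans_lt
    (hf.lt_on_openSegment hp hx hpx.ne (by rwa [openSegment_eq_Ioo hpx]))

lemma neg_of_lt (hf : StrictConcaveOn ℝ s f) (hp : p ∈ s) (hy : y ∈ s) (hpx : p < x)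
    (hxy : x < y) (hfp : 0 ≤ f p) (hfx : f x ≤ 0) : f y < 0 := by
  have h := hf.lt_on_openSegment hp hy (hpx.trans hxy).ne
    (by rw [openSegment_eq_Ioo (hpx.trans hxy)]; exact ⟨hpx, hxy⟩)
  contrapose! h
  exact hfx.trans (le_min hfp h)

end StrictConcaveOn

noncomputable def psiDeriv (r : ℕ) (x : ℝ) : ℝ :=
  1 - (((r : ℝ) - 1) / (r : ℝ)) * log (1 - x)
    - (1 - (((r : ℝ) - 1) / (r : ℝ)) * x) / (1 - x)

noncomputable def psiDeriv2 (r : ℕ) (x : ℝ) : ℝ :=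
  (((r : ℝ) - 2) - ((r : ℝ) - 1) * x) / ((r : ℝ) * (1 - x) ^ 2)

lemma psiFix_zero (r : ℕ) : psiFix r 0 = 0 := by simp [psiFix]

lemma psiDeriv_zero (r : ℕ) : psiDeriv r 0 = 0 := by simp [psiDeriv]

lemma hasDerivAt_log_one_sub {x : ℝ} (hx : x ≠ 1) :
    HasDerivAt (fun y => log (1 - y)) (-1 / (1 - x)) x := by
  simpa using ((hasDerivAt_id x).const_sub 1).log (sub_ne_zero.2 hx.symm)

lemma hasDerivAt_psiFix (r : ℕ) {x : ℝ} (hx : x ≠ 1) :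
    HasDerivAt (psiFix r) (psiDeriv r x) x := by
  have h := (hasDerivAt_id x).add
    ((((hasDerivAt_id x).const_mul (((r : ℝ) - 1) / r)).const_sub 1).mul
      (hasDerivAt_log_one_sub hx))
  refine h.congr_deriv ?_
  rw [psiDeriv, id]
  field_simp
  ring

lemma hasDerivAt_psiDeriv {r : ℕ} (hr : r ≠ 0) {x : ℝ} (hx : x ≠ 1) :
    HasDerivAt (psiDeriv r) (psiDeriv2 r x) x := by
  have h1x : 1 - x ≠ 0 := sub_ne_zero.2 hx.symm
  have h := ((hasDerivAt_log_one_sub hx).const_mul (((r : ℝ) - 1) / r)).const_sub 1 |>.sub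
    ((((hasDerivAt_id x).const_mul (((r : ℝ) - 1) / r)).const_sub 1).div
      ((hasDerivAt_id x).const_sub 1) h1x)
  refine h.congr_deriv ?_
  rw [psiDeriv2, id]
  field_simp
  ring

noncomputable def psiInflection (r : ℕ) : ℝ := ((r : ℝ) - 2) / ((r : ℝ) - 1)

lemma psiInflection_pos {r : ℕ} (hr : 2 < r) : 0 < psiInflection r := by
  have hr' : (2 : ℝ) < r := by exact_mod_cast hr
  exact div_pos (by linarith) (by linarith)

section Inflection

variable {r : ℕ} (hr : 1 < r)
include hr

lemma psiInflection_lt_one : psiInflection r < 1 := by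
  have hr' : (1 : ℝ) < r := by exact_mod_cast hr
  rw [psiInflection, div_lt_one (by linarith)]
  linarith

lemma psiDeriv2_pos {x : ℝ} (hx : x < psiInflection r) : 0 < psiDeriv2 r x := by
  have hr' : (1 : ℝ) < r := by exact_mod_cast hr
  rw [psiInflection, lt_div_iff₀ (by linarith)] at hx
  have hx1 : x < 1 := by nlinarith
  exact div_pos (by linarith) (mul_pos (by linarith) (pow_pos (by linarith) 2))

lemma psiDeriv2_neg {x : ℝ} (hx : psiInflection r < x) (hx1 : x < 1) : psiDeriv2 r x < 0 := by
  have hr' : (1 : ℝ) < r := by exact_mod_cast hr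
  rw [psiInflection, div_lt_iff₀ (by linarith)] at hx
  exact div_neg_of_neg_of_pos (by linarith) (mul_pos (by linarith) (pow_pos (by linarith) 2))

lemma strictMonoOn_psiDeriv : StrictMonoOn (psiDeriv r) (Icc 0 (psiInflection r)) :=
  strictMonoOn_of_hasDerivAt_pos (convex_Icc _ _)
    (fun _ hy => hasDerivAt_psiDeriv (by omega) (hy.2.trans_lt (psiInflection_lt_one hr)).ne)
    (fun _ hy => psiDeriv2_pos hr (by rw [interior_Icc] at hy; exact hy.2))

lemma strictMonoOn_psiFix : StrictMonoOn (psiFix r) (Icc 0 (psiInflection r)) := by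
  refine strictMonoOn_of_hasDerivAt_pos (convex_Icc _ _)
    (fun _ hy => hasDerivAt_psiFix r (hy.2.trans_lt (psiInflection_lt_one hr)).ne) ?_
  rw [interior_Icc]
  intro y hy
  simpa [psiDeriv_zero] using
    strictMonoOn_psiDeriv hr ⟨le_rfl, hy.1.le.trans hy.2.le⟩ (Ioo_subset_Icc_self hy) hy.1

lemma psiFix_pos_of_le_psiInflection {x : ℝ} (hx : 0 < x) (hxm : x ≤ psiInflection r) :
    0 < psiFix r x := by
  simpa [psiFix_zero] using
    strictMonoOn_psiFix hr ⟨le_rfl, hx.le.trans hxm⟩ ⟨hx.le, hxm⟩ hx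

lemma strictConcaveOn_psiFix : StrictConcaveOn ℝ (Ico (psiInflection r) 1) (psiFix r) :=
  StrictAntiOn.strictConcaveOn_of_hasDerivAt (convex_Ico _ _)
    (fun _ hy => hasDerivAt_psiFix r hy.2.ne)
    (strictAntiOn_of_hasDerivAt_neg (convex_Ico _ _)
      (fun _ hy => hasDerivAt_psiDeriv (by omega) hy.2.ne)
      (fun _ hy => by rw [interior_Ico] at hy; exact psiDeriv2_neg hr hy.1 hy.2))

lemma psiInflection_lt_one_sub_exp_neg : psiInflection r < 1 - exp (-r) := by
  have hr' : (1 : ℝ) < r := by exact_mod_cast hr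
  have hexp : exp (-r) * ((r : ℝ) - 1) < 1 :=
    calc exp (-r) * ((r : ℝ) - 1) < exp (-r) * exp r := by
          gcongr
          linarith [add_one_le_exp (r : ℝ)]
      _ = 1 := by rw [← exp_add, neg_add_cancel, exp_zero]
  rw [psiInflection, div_lt_iff₀ (by linarith)]
  linarith

end Inflection

lemma psiFix_one_sub_exp_neg {r : ℕ} (hr : r ≠ 0) :
    psiFix r (1 - exp (-r)) = -r * exp (-r) := by
  have hr' : (r : ℝ) ≠ 0 := by exact_mod_cast hr
  rw [psiFix, sub_sub_cancel, log_exp]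
  field_simp
  ring

lemma exists_psiFix_eq_zero {r : ℕ} (hr : 2 < r) :
    ∃ x ∈ Ioo (psiInflection r) (1 - exp (-r)), psiFix r x = 0 := by
  have hcont : ContinuousOn (psiFix r) (Icc (psiInflection r) (1 - exp (-r))) :=
    fun y hy => (hasDerivAt_psiFix r
      (hy.2.trans_lt (sub_lt_self 1 (exp_pos _))).ne).continuousAt.continuousWithinAt
  have hfa : psiFix r (1 - exp (-r)) < 0 := by
    rw [psiFix_one_sub_exp_neg (by omega)]
    exact mul_neg_of_neg_of_pos (by simpa using Nat.zero_lt_of_lt hr) (exp_pos _)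
  exact intermediate_value_Ioo' (psiInflection_lt_one_sub_exp_neg (by omega)).le hcont
    ⟨hfa, psiFix_pos_of_le_psiInflection (by omega) (psiInflection_pos hr) le_rfl⟩

theorem stmt16 (r : ℕ) (hr : 3 ≤ r) :
    ∃ x ∈ Set.Ioo (0 : ℝ) 1, psiFix r x = 0 ∧
      (∀ y ∈ Set.Ioo (0 : ℝ) 1, psiFix r y = 0 → y = x) ∧
      ((r : ℝ) - 2) / ((r : ℝ) - 1) < x ∧
      (∀ y : ℝ, 0 < y → y < x → 0 < psiFix r y) ∧
      (∀ y : ℝ, x < y → y < 1 → psiFix r y < 0) := by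
  have hm : 0 < psiInflection r := psiInflection_pos hr
  have hm1 : psiInflection r < 1 := psiInflection_lt_one (by omega)
  obtain ⟨x, ⟨hmx, hxa⟩, hx⟩ := exists_psiFix_eq_zero hr
  have hx1 : x < 1 := hxa.trans (sub_lt_self 1 (exp_pos _))
  have hconc := strictConcaveOn_psiFix (r := r) (by omega)
  have hfm : 0 ≤ psiFix r (psiInflection r) :=
    (psiFix_pos_of_le_psiInflection (by omega) hm le_rfl).le
  have hpos : ∀ y : ℝ, 0 < y → y < x → 0 < psiFix r y := by
    intro y hy hyx
    rcases le_or_gt y (psiInflection r) with hym | hmy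
    · exact psiFix_pos_of_le_psiInflection (by omega) hy hym
    · exact hconc.pos_of_mem_Ioo ⟨le_rfl, hm1⟩ ⟨hmx.le, hx1⟩ ⟨hmy, hyx⟩ hfm hx.ge
  have hneg : ∀ y : ℝ, x < y → y < 1 → psiFix r y < 0 := fun y hxy hy1 =>
    hconc.neg_of_lt ⟨le_rfl, hm1⟩ ⟨(hmx.trans hxy).le, hy1⟩ hmx hxy hfm hx.le
  refine ⟨x, ⟨hm.trans hmx, hx1⟩, hx, fun y hy hy0 => ?_, hmx, hpos, hneg⟩
  rcases lt_trichotomy y x with h | h | h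
  · exact absurd hy0 (hpos y hy.1 h).ne'
  · exact h
  · exact absurd hy0 (hneg y h hy.2).ne
end

section
/- Let W be a random variable taking values in ℕ = {1,2,...} with probability generating function ρ(s) = E[s^W], and for x ∈ (0,1) define ψ(x) = x + (1 + ρ(x)/ρ′(x) − x) log(1−x) and h(x) = −log(1−x)/ρ′(x). Then for all x ∈ (0,1), h′(x) = −ψ′(x)/ρ(x); in particular, ψ′(x) has the same sign as −h′(x), so the locations of the local minima of h in (0,1) coincide exactly with the locations of the local maxima of ψ in (0,1). Moreover, if E[W²] < ∞, then as x ↓ 0, ψ(1−x) = 1 − h(1−x) − x + o(x). -/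
/-!
With `φ(x) = x + (1 - x) log(1 - x)` one has `ψ = φ - ρ h` and `φ' = -log(1 - x) = ρ' h`, hence
`ψ' = -ρ h'`. Since `h` and `ψ` are analytic on `(0,1)`, near any point their derivatives either
vanish identically or keep a constant sign on each side (Darboux), so a local minimum of `h` and a
local maximum of `ψ` are both detected by the same one-sided signs of `h'`.

At `1`, `ψ(1-x) - (1 - h(1-x) - x) = log x · (x ρ'(1-x) + ρ(1-x) - 1) / ρ'(1-x)`, and termwise
`|(1-x)^k - 1 + k x (1-x)^(k-1)| ≤ k² x²`, so the numerator is at most `E[W²] x²`.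
-/

open Filter Topology Asymptotics

/-- `h(x) = -log(1-x)/ρ'(x)`. -/
noncomputable def hfun (p : ℕ → ℝ) (x : ℝ) : ℝ :=
  -Real.log (1 - x) / deriv (rho p) x

/-- `ψ(x) = x + (1 + ρ(x)/ρ'(x) - x) log(1-x)`. -/
noncomputable def psi (p : ℕ → ℝ) (x : ℝ) : ℝ :=
  x + (1 + rho p x / deriv (rho p) x - x) * Real.log (1 - x)

open Set

theorem IsLocalMin.eventually_deriv_neg_nhdsLT {f : ℝ → ℝ} {x : ℝ} (hmin : IsLocalMin f x)
    (hc : ContinuousAt f x) (hd : ∀ᶠ y in 𝓝[<] x, DifferentiableAt ℝ f y)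
    (hne : ∀ᶠ y in 𝓝[<] x, deriv f y ≠ 0) : ∀ᶠ y in 𝓝[<] x, deriv f y < 0 := by
  obtain ⟨a, hax, ha⟩ := (nhdsLT_basis x).eventually_iff.mp (hd.and hne)
  rcases hasDerivWithinAt_forall_lt_or_forall_gt_of_forall_ne (convex_Ioo a x)
    (fun y hy => (ha hy).1.hasDerivAt.hasDerivWithinAt) (fun y hy => (ha hy).2) with hneg | hpos
  · exact mem_of_superset (Ioo_mem_nhdsLT hax) hneg
  · have hmono : StrictMonoOn f (Ioc a x) := by
      refine strictMonoOn_of_deriv_pos (convex_Ioc a x) (fun y hy => ?_) ?_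
      · rcases hy.2.eq_or_lt with rfl | hyx
        · exact hc.continuousWithinAt
        · exact (ha ⟨hy.1, hyx⟩).1.continuousAt.continuousWithinAt
      · simpa only [interior_Ioc] using hpos
    obtain ⟨y, hfy, hy⟩ :=
      (Eventually.and (hmin.filter_mono nhdsWithin_le_nhds) (Ioo_mem_nhdsLT hax)).exists
    exact absurd (hmono ⟨hy.1, hy.2.le⟩ ⟨hax, le_rfl⟩ hy.2) (not_lt.mpr hfy)

theorem IsLocalMin.eventually_deriv_pos_nhdsGT {f : ℝ → ℝ} {x : ℝ} (hmin : IsLocalMin f x)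
    (hc : ContinuousAt f x) (hd : ∀ᶠ y in 𝓝[>] x, DifferentiableAt ℝ f y)
    (hne : ∀ᶠ y in 𝓝[>] x, deriv f y ≠ 0) : ∀ᶠ y in 𝓝[>] x, 0 < deriv f y := by
  obtain ⟨b, hxb, hb⟩ := (nhdsGT_basis x).eventually_iff.mp (hd.and hne)
  rcases hasDerivWithinAt_forall_lt_or_forall_gt_of_forall_ne (convex_Ioo x b)
    (fun y hy => (hb hy).1.hasDerivAt.hasDerivWithinAt) (fun y hy => (hb hy).2) with hneg | hpos
  · have hanti : StrictAntiOn f (Ico x b) := by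
      refine strictAntiOn_of_deriv_neg (convex_Ico x b) (fun y hy => ?_) ?_
      · rcases hy.1.eq_or_lt with rfl | hxy
        · exact hc.continuousWithinAt
        · exact (hb ⟨hxy, hy.2⟩).1.continuousAt.continuousWithinAt
      · simpa only [interior_Ico] using hneg
    obtain ⟨y, hfy, hy⟩ :=
      (Eventually.and (hmin.filter_mono nhdsWithin_le_nhds) (Ioo_mem_nhdsGT hxb)).exists
    exact absurd (hanti ⟨le_rfl, hxb⟩ ⟨hy.1.le, hy.2⟩ hy.1) (not_lt.mpr hfy)
  · exact mem_of_superset (Ioo_mem_nhdsGT hxb) hpos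

theorem AnalyticAt.isLocalMin_iff {f : ℝ → ℝ} {x : ℝ} (hf : AnalyticAt ℝ f x) :
    IsLocalMin f x ↔ (∀ᶠ y in 𝓝[<] x, deriv f y ≤ 0) ∧ ∀ᶠ y in 𝓝[>] x, 0 ≤ deriv f y := by
  have hd : ∀ᶠ y in 𝓝 x, DifferentiableAt ℝ f y :=
    hf.eventually_analyticAt.mono fun y hy => hy.differentiableAt
  refine ⟨fun hmin => ?_, fun h => isLocalMin_of_deriv hf.continuousAt
    (nhdsWithin_le_nhds hd) h.1 h.2⟩
  rcases hf.deriv.eventually_eq_zero_or_eventually_ne_zero with hzero | hne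
  · exact ⟨nhdsWithin_le_nhds (hzero.mono fun y hy => hy.le),
      nhdsWithin_le_nhds (hzero.mono fun y hy => hy.ge)⟩
  · exact ⟨(hmin.eventually_deriv_neg_nhdsLT hf.continuousAt (nhdsWithin_le_nhds hd)
        (nhdsLT_le_nhdsNE x hne)).mono fun y hy => hy.le,
      (hmin.eventually_deriv_pos_nhdsGT hf.continuousAt (nhdsWithin_le_nhds hd)
        (nhdsGT_le_nhdsNE x hne)).mono fun y hy => hy.le⟩

theorem isLocalMin_iff_isLocalMax_of_deriv_eq_neg_mul {f g R : ℝ → ℝ} {x : ℝ}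
    (hf : AnalyticAt ℝ f x) (hg : AnalyticAt ℝ g x)
    (hgf : ∀ᶠ y in 𝓝 x, deriv g y = -(R y * deriv f y)) (hR : ∀ᶠ y in 𝓝 x, 0 < R y) :
    IsLocalMin f x ↔ IsLocalMax g x := by
  have hsign : ∀ᶠ y in 𝓝 x, (deriv f y ≤ 0 ↔ deriv (-g) y ≤ 0) ∧
      (0 ≤ deriv f y ↔ 0 ≤ deriv (-g) y) := by
    filter_upwards [hgf, hR] with y hy hRy
    rw [deriv.neg, hy, neg_neg]
    exact ⟨by rw [← mul_le_mul_iff_of_pos_left hRy, mul_zero],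
      (mul_nonneg_iff_of_pos_left hRy).symm⟩
  have hmax : IsLocalMax g x ↔ IsLocalMin (-g) x :=
    ⟨IsLocalMax.neg, fun h => by simpa using h.neg⟩
  rw [hmax, hf.isLocalMin_iff, hg.neg.isLocalMin_iff]
  exact and_congr (eventually_congr (nhdsWithin_le_nhds (hsign.mono fun y hy => hy.1)))
    (eventually_congr (nhdsWithin_le_nhds (hsign.mono fun y hy => hy.2)))

section PowerSeries

variable {p : ℕ → ℝ} {C : ℝ}

theorem summable_mul_pow_of_abs_le (hC : ∀ k, |p k| ≤ C) {x : ℝ} (hx : |x| < 1) :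
    Summable fun k => p k * x ^ k := by
  refine .of_norm_bounded ((summable_geometric_of_lt_one (abs_nonneg x) hx).mul_left C) fun k => ?_
  rw [norm_mul, norm_pow, Real.norm_eq_abs, Real.norm_eq_abs]
  exact mul_le_mul_of_nonneg_right (hC k) (by positivity)

theorem summable_natCast_mul_pow_sub_one {r : ℝ} (hr : |r| < 1) :
    Summable fun k : ℕ => (k : ℝ) * r ^ (k - 1) := by
  refine (summable_nat_add_iff 1).mp ?_
  simp only [Nat.cast_add, Nat.cast_one, Nat.add_sub_cancel, add_mul, one_mul]
  exact (summable_pow_mul_geometric_of_norm_lt_one 1 hr).add (summable_geometric_of_abs_lt_one hr)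
    |>.congr fun k => by simp

theorem hasDerivAt_rho (hC : ∀ k, |p k| ≤ C) {x : ℝ} (hx : |x| < 1) :
    HasDerivAt (rho p) (∑' k : ℕ, k * p k * x ^ (k - 1)) x := by
  obtain ⟨r, hxr, hr1⟩ := exists_between hx
  have hr : |r| < 1 := by rwa [abs_of_pos ((abs_nonneg x).trans_lt hxr)]
  refine hasDerivAt_tsum_of_isPreconnected (t := Ioo (-r) r) (y₀ := 0)
    (g' := fun k y => k * p k * y ^ (k - 1))
    ((summable_natCast_mul_pow_sub_one hr).mul_left C) isOpen_Ioo isPreconnected_Ioo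
    (fun k y _ => ((hasDerivAt_pow k y).const_mul (p k)).congr_deriv (by ring))
    (fun k y hy => ?_) (by simpa using (abs_nonneg x).trans_lt hxr)
    (summable_mul_pow_of_abs_le hC (by simp)) (abs_lt.mp hxr)
  have hyr : |y| ≤ r := (abs_lt.mpr hy).le
  rw [norm_mul, norm_mul, norm_pow, Real.norm_natCast, Real.norm_eq_abs, Real.norm_eq_abs]
  calc k * |p k| * |y| ^ (k - 1) ≤ k * C * r ^ (k - 1) :=
        mul_le_mul (mul_le_mul_of_nonneg_left (hC k) k.cast_nonneg)
          (pow_le_pow_left₀ (abs_nonneg y) hyr _) (by positivity)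
          (mul_nonneg k.cast_nonneg ((abs_nonneg _).trans (hC k)))
    _ = C * (k * r ^ (k - 1)) := by ring

theorem analyticAt_rho (hC : ∀ k, |p k| ≤ C) {x : ℝ} (hx : |x| < 1) :
    AnalyticAt ℝ (rho p) x := by
  set q := FormalMultilinearSeries.ofScalars ℝ p
  have hq : 1 ≤ q.radius := by
    simpa using q.le_radius_of_bound C (r := 1) fun n => by simpa [q] using hC n
  have hsum : q.sum = rho p := funext fun y => by
    show FormalMultilinearSeries.ofScalarsSum p y = _
    simp [FormalMultilinearSeries.ofScalars_sum_eq, rho]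
  have hball := q.hasFPowerSeriesOnBall (zero_lt_one.trans_le hq)
  rw [hsum] at hball
  refine hball.analyticAt_of_mem (lt_of_lt_of_le ?_ hq)
  simpa [← ofReal_norm] using hx

theorem summable_natCast_mul_mul_pow_sub_one (hC : ∀ k, |p k| ≤ C) {x : ℝ} (hx : |x| < 1) :
    Summable fun k : ℕ => k * p k * x ^ (k - 1) := by
  refine .of_norm_bounded ((summable_natCast_mul_pow_sub_one (abs_abs x ▸ hx)).mul_left C)
    fun k => ?_
  rw [norm_mul, norm_mul, norm_pow, Real.norm_natCast, Real.norm_eq_abs, Real.norm_eq_abs]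
  calc k * |p k| * |x| ^ (k - 1) ≤ k * C * |x| ^ (k - 1) := by gcongr; exact hC k
    _ = C * (k * |x| ^ (k - 1)) := by ring

theorem deriv_rho (hC : ∀ k, |p k| ≤ C) {x : ℝ} (hx : |x| < 1) :
    deriv (rho p) x = ∑' k : ℕ, k * p k * x ^ (k - 1) :=
  (hasDerivAt_rho hC hx).deriv

end PowerSeries

section GeneratingFunction

variable {p : ℕ → ℝ}

theorem abs_lt_one_of_mem_Ico {x : ℝ} (hx : x ∈ Ico (0 : ℝ) 1) : |x| < 1 :=
  abs_lt.mpr ⟨by linarith [hx.1], hx.2⟩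

theorem abs_le_one_of_hasSum_one (hpnn : ∀ k, 0 ≤ p k) (hp : HasSum p 1) (k : ℕ) :
    |p k| ≤ 1 := by
  rw [abs_of_nonneg (hpnn k)]
  exact le_hasSum hp k fun j _ => hpnn j

theorem exists_pos_of_hasSum_one (hpnn : ∀ k, 0 ≤ p k) (hp : HasSum p 1) (hp0 : p 0 = 0) :
    ∃ k, 0 < k ∧ 0 < p k := by
  by_contra! h
  have hzero : p = 0 := funext fun k => by
    rcases k with _ | k
    · exact hp0
    · exact le_antisymm (h _ k.succ_pos) (hpnn _)
  exact one_ne_zero (hp.unique (hzero ▸ hasSum_zero))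

theorem rho_pos (hpnn : ∀ k, 0 ≤ p k) (hp : HasSum p 1) (hp0 : p 0 = 0) {x : ℝ}
    (hx : x ∈ Ioo (0 : ℝ) 1) : 0 < rho p x := by
  obtain ⟨k, -, hk⟩ := exists_pos_of_hasSum_one hpnn hp hp0
  exact (summable_mul_pow_of_abs_le (abs_le_one_of_hasSum_one hpnn hp)
    (abs_lt_one_of_mem_Ico (Ioo_subset_Ico_self hx))).tsum_pos
    (fun j => mul_nonneg (hpnn j) (pow_nonneg hx.1.le j)) k (mul_pos hk (pow_pos hx.1 k))

theorem deriv_rho_pos (hpnn : ∀ k, 0 ≤ p k) (hp : HasSum p 1) (hp0 : p 0 = 0) {x : ℝ}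
    (hx : x ∈ Ioo (0 : ℝ) 1) : 0 < deriv (rho p) x := by
  obtain ⟨k, hk0, hk⟩ := exists_pos_of_hasSum_one hpnn hp hp0
  have hC := abs_le_one_of_hasSum_one hpnn hp
  have hx' := abs_lt_one_of_mem_Ico (Ioo_subset_Ico_self hx)
  rw [deriv_rho hC hx']
  exact (summable_natCast_mul_mul_pow_sub_one hC hx').tsum_pos
    (fun j => mul_nonneg (mul_nonneg j.cast_nonneg (hpnn j)) (pow_nonneg hx.1.le _)) k
    (mul_pos (mul_pos (Nat.cast_pos.mpr hk0) hk) (pow_pos hx.1 _))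

theorem monotoneOn_deriv_rho (hpnn : ∀ k, 0 ≤ p k) (hp : HasSum p 1) :
    MonotoneOn (deriv (rho p)) (Ico 0 1) := by
  intro a ha b hb hab
  have hC := abs_le_one_of_hasSum_one hpnn hp
  have ha' := abs_lt_one_of_mem_Ico ha
  have hb' := abs_lt_one_of_mem_Ico hb
  rw [deriv_rho hC ha', deriv_rho hC hb']
  refine Summable.tsum_le_tsum (fun k => ?_) (summable_natCast_mul_mul_pow_sub_one hC ha')
    (summable_natCast_mul_mul_pow_sub_one hC hb')
  exact mul_le_mul_of_nonneg_left (pow_le_pow_left₀ ha.1 hab _)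
    (mul_nonneg k.cast_nonneg (hpnn k))

end GeneratingFunction

theorem psi_eq_sub_rho_mul_hfun (p : ℕ → ℝ) :
    psi p = fun x => x + (1 - x) * Real.log (1 - x) - rho p x * hfun p x := by
  funext x
  simp only [psi, hfun]
  ring

section PsiAndH

variable {p : ℕ → ℝ}

theorem analyticAt_hfun (hpnn : ∀ k, 0 ≤ p k) (hp : HasSum p 1) (hp0 : p 0 = 0) {x : ℝ}
    (hx : x ∈ Ioo (0 : ℝ) 1) : AnalyticAt ℝ (hfun p) x := by
  have hρ := analyticAt_rho (abs_le_one_of_hasSum_one hpnn hp)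
    (abs_lt_one_of_mem_Ico (Ioo_subset_Ico_self hx))
  exact ((analyticAt_const.sub analyticAt_id).log (by simpa using hx.2)).neg.div hρ.deriv
    (deriv_rho_pos hpnn hp hp0 hx).ne'

theorem analyticAt_psi (hpnn : ∀ k, 0 ≤ p k) (hp : HasSum p 1) (hp0 : p 0 = 0) {x : ℝ}
    (hx : x ∈ Ioo (0 : ℝ) 1) : AnalyticAt ℝ (psi p) x := by
  have hρ := analyticAt_rho (abs_le_one_of_hasSum_one hpnn hp)
    (abs_lt_one_of_mem_Ico (Ioo_subset_Ico_self hx))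
  have hlog : AnalyticAt ℝ (fun y => Real.log (1 - y)) x :=
    (analyticAt_const.sub analyticAt_id).log (by simpa using hx.2)
  rw [psi_eq_sub_rho_mul_hfun]
  exact (analyticAt_id.add ((analyticAt_const.sub analyticAt_id).mul hlog)).sub
    (hρ.mul (analyticAt_hfun hpnn hp hp0 hx))

theorem hasDerivAt_psi (hpnn : ∀ k, 0 ≤ p k) (hp : HasSum p 1) (hp0 : p 0 = 0) {x : ℝ}
    (hx : x ∈ Ioo (0 : ℝ) 1) :
    HasDerivAt (psi p) (-(rho p x * deriv (hfun p) x)) x := by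
  have hx1 : 1 - x ≠ 0 := by linarith [hx.2]
  have hφ : HasDerivAt (fun y => y + (1 - y) * Real.log (1 - y)) (-Real.log (1 - x)) x := by
    have h1 := (hasDerivAt_id' x).const_sub 1
    refine ((hasDerivAt_id' x).add (h1.mul (h1.log hx1))).congr_deriv ?_
    field_simp
    ring
  have hρ := (analyticAt_rho (abs_le_one_of_hasSum_one hpnn hp)
    (abs_lt_one_of_mem_Ico (Ioo_subset_Ico_self hx))).differentiableAt.hasDerivAt
  have hh := (analyticAt_hfun hpnn hp hp0 hx).differentiableAt.hasDerivAt
  have hcancel : deriv (rho p) x * hfun p x = -Real.log (1 - x) :=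
    mul_div_cancel₀ _ (deriv_rho_pos hpnn hp hp0 hx).ne'
  rw [psi_eq_sub_rho_mul_hfun]
  refine (hφ.sub (hρ.mul hh)).congr_deriv ?_
  rw [hcancel]
  ring

theorem deriv_hfun_eq (hpnn : ∀ k, 0 ≤ p k) (hp : HasSum p 1) (hp0 : p 0 = 0) {x : ℝ}
    (hx : x ∈ Ioo (0 : ℝ) 1) : deriv (hfun p) x = -deriv (psi p) x / rho p x := by
  rw [(hasDerivAt_psi hpnn hp hp0 hx).deriv, neg_neg,
    mul_div_cancel_left₀ _ (rho_pos hpnn hp hp0 hx).ne']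

end PsiAndH

section Asymptotics

variable {p : ℕ → ℝ}

theorem abs_one_sub_pow_sub_one_add_le {x : ℝ} (h0 : 0 ≤ x) (h1 : x ≤ 1) (k : ℕ) :
    |(1 - x) ^ k - 1 + k * x * (1 - x) ^ (k - 1)| ≤ k ^ 2 * x ^ 2 := by
  induction k with
  | zero => simp
  | succ k ih =>
    rcases k with _ | k
    · simp [sq_nonneg]
    have hpow : 0 ≤ (1 - x) ^ k ∧ (1 - x) ^ k ≤ 1 :=
      ⟨pow_nonneg (by linarith) k, pow_le_one₀ (by linarith) (by linarith)⟩
    have hstep : (1 - x) ^ (k + 2) - 1 + ((k + 2 : ℕ) : ℝ) * x * (1 - x) ^ (k + 1) =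
        ((1 - x) ^ (k + 1) - 1 + ((k + 1 : ℕ) : ℝ) * x * (1 - x) ^ k) -
          (k + 1) * x ^ 2 * (1 - x) ^ k := by
      push_cast
      ring
    simp only [Nat.add_sub_cancel] at ih ⊢
    rw [hstep]
    calc _ ≤ ((k + 1 : ℕ) : ℝ) ^ 2 * x ^ 2 + (k + 1) * x ^ 2 * (1 - x) ^ k := by
          refine (abs_sub _ _).trans (add_le_add ih (abs_of_nonneg ?_).le)
          have := hpow.1; positivity
      _ ≤ ((k + 1 + 1 : ℕ) : ℝ) ^ 2 * x ^ 2 := by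
          push_cast
          nlinarith [mul_le_mul_of_nonneg_left hpow.2 (by positivity : (0 : ℝ) ≤ (k + 1) * x ^ 2)]

theorem abs_mul_deriv_rho_add_rho_sub_one_le (hpnn : ∀ k, 0 ≤ p k) (hp : HasSum p 1) {S : ℝ}
    (hS : HasSum (fun k : ℕ => (k : ℝ) ^ 2 * p k) S) {x : ℝ} (hx0 : 0 < x) (hx1 : x ≤ 1) :
    |x * deriv (rho p) (1 - x) + rho p (1 - x) - 1| ≤ S * x ^ 2 := by
  have hC := abs_le_one_of_hasSum_one hpnn hp
  have hu : |1 - x| < 1 := abs_lt.mpr ⟨by linarith, by linarith⟩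
  have hsum : HasSum (fun k => p k * ((1 - x) ^ k - 1 + k * x * (1 - x) ^ (k - 1)))
      (x * deriv (rho p) (1 - x) + rho p (1 - x) - 1) := by
    rw [deriv_rho hC hu]
    exact ((((summable_natCast_mul_mul_pow_sub_one hC hu).hasSum.mul_left x).add
      (summable_mul_pow_of_abs_le hC hu).hasSum).sub hp).congr_fun fun k => by ring
  refine hsum.norm_le_of_bounded (hS.mul_right (x ^ 2)) fun k => ?_
  calc ‖p k * ((1 - x) ^ k - 1 + k * x * (1 - x) ^ (k - 1))‖
      = p k * |(1 - x) ^ k - 1 + k * x * (1 - x) ^ (k - 1)| := by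
        rw [Real.norm_eq_abs, abs_mul, abs_of_nonneg (hpnn k)]
    _ ≤ p k * (k ^ 2 * x ^ 2) :=
        mul_le_mul_of_nonneg_left (abs_one_sub_pow_sub_one_add_le hx0.le hx1 k) (hpnn k)
    _ = k ^ 2 * p k * x ^ 2 := by ring

theorem psi_one_sub_sub_eq {x : ℝ} (hx : deriv (rho p) (1 - x) ≠ 0) :
    psi p (1 - x) - (1 - hfun p (1 - x) - x) =
      Real.log x * (x * deriv (rho p) (1 - x) + rho p (1 - x) - 1) / deriv (rho p) (1 - x) := by
  simp only [psi, hfun, sub_sub_cancel]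
  field_simp
  ring

theorem isLittleO_sq_mul_log : (fun x : ℝ => x ^ 2 * Real.log x) =o[𝓝[>] 0] fun x => x := by
  have h := (isBigO_refl (fun x : ℝ => x ^ 2) (𝓝[>] 0)).mul_isLittleO
    (isLittleO_log_rpow_nhdsGT_zero (r := -1) (by norm_num))
  refine h.congr' EventuallyEq.rfl ?_
  filter_upwards [self_mem_nhdsWithin] with x hx
  rw [Real.rpow_neg_one]
  field_simp [(show (0 : ℝ) < x from hx).ne']

theorem isLittleO_psi_one_sub (hpnn : ∀ k, 0 ≤ p k) (hp : HasSum p 1) (hp0 : p 0 = 0)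
    (hS : Summable fun k : ℕ => (k : ℝ) ^ 2 * p k) :
    (fun x : ℝ => psi p (1 - x) - (1 - hfun p (1 - x) - x)) =o[𝓝[>] 0] fun x => x := by
  set c := deriv (rho p) (1 / 2)
  have hc : 0 < c := deriv_rho_pos hpnn hp hp0 (by norm_num)
  have hS0 : 0 ≤ ∑' k : ℕ, (k : ℝ) ^ 2 * p k :=
    tsum_nonneg fun k => mul_nonneg (sq_nonneg _) (hpnn k)
  refine IsBigO.trans_isLittleO (.of_bound ((∑' k : ℕ, (k : ℝ) ^ 2 * p k) / c) ?_)
    isLittleO_sq_mul_log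
  filter_upwards [Ioo_mem_nhdsGT (show (0 : ℝ) < 1 / 2 by norm_num)] with x hx
  have hρ' : c ≤ deriv (rho p) (1 - x) :=
    monotoneOn_deriv_rho hpnn hp ⟨by norm_num, by norm_num⟩
      ⟨by linarith [hx.2], by linarith [hx.1]⟩ (by linarith [hx.2])
  rw [psi_one_sub_sub_eq (hc.trans_le hρ').ne', Real.norm_eq_abs, Real.norm_eq_abs, abs_div,
    abs_mul, abs_mul, abs_of_pos (hc.trans_le hρ'), abs_of_pos (pow_pos hx.1 2)]
  have hN := abs_mul_deriv_rho_add_rho_sub_one_le hpnn hp hS.hasSum hx.1 (by linarith [hx.2])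
  calc |Real.log x| * |x * deriv (rho p) (1 - x) + rho p (1 - x) - 1| / deriv (rho p) (1 - x)
      ≤ |Real.log x| * ((∑' k : ℕ, (k : ℝ) ^ 2 * p k) * x ^ 2) / c := by
        gcongr
    _ = _ := by ring

end Asymptotics

theorem stmt17 (p : ℕ → ℝ) (hpnn : ∀ k, 0 ≤ p k) (hp0 : p 0 = 0)
    (hpsum : ∑' k, p k = 1) :
    (∀ x ∈ Set.Ioo (0 : ℝ) 1,
      deriv (hfun p) x = -(deriv (psi p) x) / rho p x) ∧
    (∀ x ∈ Set.Ioo (0 : ℝ) 1,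
      (0 < deriv (psi p) x ↔ deriv (hfun p) x < 0) ∧
      (deriv (psi p) x < 0 ↔ 0 < deriv (hfun p) x)) ∧
    (∀ x ∈ Set.Ioo (0 : ℝ) 1, (IsLocalMin (hfun p) x ↔ IsLocalMax (psi p) x)) ∧
    (Summable (fun k : ℕ => (k : ℝ) ^ 2 * p k) →
      (fun x : ℝ => psi p (1 - x) - (1 - hfun p (1 - x) - x)) =o[𝓝[>] 0]
        (fun x : ℝ => x)) := by
  have hp : HasSum p 1 := by
    have hsummable : Summable p := by
      by_contra h
      simp [tsum_eq_zero_of_not_summable h] at hpsum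
    exact hpsum ▸ hsummable.hasSum
  refine ⟨fun x hx => deriv_hfun_eq hpnn hp hp0 hx, fun x hx => ?_, fun x hx => ?_,
    isLittleO_psi_one_sub hpnn hp hp0⟩
  · have hρ := rho_pos hpnn hp hp0 hx
    rw [deriv_hfun_eq hpnn hp hp0 hx, div_lt_iff₀ hρ, lt_div_iff₀ hρ, zero_mul, neg_lt_zero,
      neg_pos]
    exact ⟨Iff.rfl, Iff.rfl⟩
  · have hnhds : Ioo (0 : ℝ) 1 ∈ 𝓝 x := isOpen_Ioo.mem_nhds hx
    refine isLocalMin_iff_isLocalMax_of_deriv_eq_neg_mul (analyticAt_hfun hpnn hp hp0 hx)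
      (analyticAt_psi hpnn hp hp0 hx) ?_ (mem_of_superset hnhds fun y => rho_pos hpnn hp hp0)
    exact mem_of_superset hnhds fun y hy => (hasDerivAt_psi hpnn hp hp0 hy).deriv
end
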